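/- arXiv:2511.16173 — 6 statements merged into one kernel-verified Lean document; each statement's English description precedes it below -/
import Mathlib

section
/- For every γ ∈ (0,2) there exists a constant C_γ such that for every Borel probability measure μ on the unit sphere S² ⊂ ℝ³ with barycenter zero, ∫_{S²} x dμ(x) = 0, one has 2γ ∬_{S²×S²} log(1/|x−y|) dμ(x) dμ(y) ≤ D(μ‖σ) + C_γ. (Strengthened logarithmic Hardy–Littlewood–Sobolev inequality on the two-sphere; without the barycenter constraint this holds only for γ ≤ 1.) -/
/-!
Write `f = dμ/dσ` and `Φ(x) = ∫ log (2 / |x - y|) dμ(y)`. Young's inequality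
`f · 2γΦ ≤ f log f + exp (2γΦ)` reduces the claim to a bound on `∫ exp (2γΦ) dσ` that is uniform
in `μ`. Fix `s = 1 + γ / 2 ∈ (γ, 2)`. A vanishing barycenter gives `∫ |x - y|² dμ(y) = 2` for
every `x ∈ S²`, so small balls `B(x, δ)` carry `μ`-mass at most `s / (2γ)` (a number `> 1 / 2`).
Splitting `Φ(x)` into the contribution of `B(x, δ)` and the rest, Jensen's inequality for the
sub-probability measure `(2γ / s) • μ|_{B(x, δ)}` gives `exp (2γΦ(x)) ≲ 1 + ∫ |x - y|^(-s) dμ(y)`.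
Finally, rotation invariance and a packing argument give `σ(B(y, r)) ≤ 64 r²`, so
`∫ |x - y|^(-s) dσ(x)` is bounded uniformly in `y ∈ S²` because `s < 2`, and Tonelli concludes.
-/

open MeasureTheory
open scoped ENNReal Classical

/-- Euclidean three-space, containing the unit two-sphere. -/
abbrev E3 : Type := EuclideanSpace ℝ (Fin 3)

/-- The relative entropy (Kullback–Leibler divergence) `D(μ‖ν)`, equal to
`∫ log(dμ/dν) dμ` when `μ ≪ ν` and this integral is defined, and `∞` otherwise. -/
noncomputable def relEnt {α : Type*} [MeasurableSpace α] (μ ν : Measure α) : ℝ≥0∞ :=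
  if μ ≪ ν ∧ Integrable (fun x => Real.log (μ.rnDeriv ν x).toReal) μ then
    ENNReal.ofReal (∫ x, Real.log (μ.rnDeriv ν x).toReal ∂μ)
  else ∞

open Metric Set

namespace EReal

lemma exp_coe_ennreal_of_ne_top {t : ℝ≥0∞} (ht : t ≠ ⊤) :
    exp t = ENNReal.ofReal (Real.exp t.toReal) := by
  rw [← coe_ennreal_toReal ht, exp_coe]

lemma exp_coe_ennreal_ofReal (a : ℝ) :
    exp (ENNReal.ofReal a) = ENNReal.ofReal (Real.exp (max a 0)) := by
  rw [coe_ennreal_ofReal, exp_coe]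

lemma exp_coe_ennreal_add (s t : ℝ≥0∞) : exp ↑(s + t) = exp s * exp t := by
  rw [coe_ennreal_add, exp_add]

lemma monotone_exp_coe_ennreal : Monotone fun t : ℝ≥0∞ => exp t :=
  exp_monotone.comp fun _ _ h => coe_ennreal_le_coe_ennreal_iff.2 h

lemma le_exp_coe_ennreal (t : ℝ≥0∞) : t ≤ exp t := by
  rcases eq_or_ne t ⊤ with rfl | ht
  · simp
  · rw [exp_coe_ennreal_of_ne_top ht]
    exact ENNReal.le_ofReal_iff_toReal_le ht (Real.exp_pos _).le |>.2
      (by linarith [Real.add_one_le_exp t.toReal])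

end EReal

lemma Real.mul_le_mul_log_add_exp {a : ℝ} (ha : 0 ≤ a) (t : ℝ) :
    a * t ≤ a * Real.log a + Real.exp t := by
  rcases ha.eq_or_lt with rfl | ha
  · simp [(Real.exp_pos t).le]
  -- tangent line of `exp` at `log a`
  have h := Real.add_one_le_exp (t - Real.log a)
  rw [Real.exp_sub, Real.exp_log ha, le_div_iff₀ ha] at h
  nlinarith

lemma ENNReal.mul_le_ofReal_mul_log_add_exp {a : ℝ≥0∞} (ha : a ≠ ⊤) (t : ℝ≥0∞) :
    a * t ≤ ENNReal.ofReal (a.toReal * Real.log a.toReal) + EReal.exp t := by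
  rcases eq_or_ne t ⊤ with rfl | ht
  · simp
  rw [EReal.exp_coe_ennreal_of_ne_top ht, ← ENNReal.ofReal_toReal ha,
    ← ENNReal.ofReal_toReal ht, ← ENNReal.ofReal_mul ENNReal.toReal_nonneg,
    ENNReal.toReal_ofReal ENNReal.toReal_nonneg, ENNReal.toReal_ofReal ENNReal.toReal_nonneg]
  exact (ENNReal.ofReal_le_ofReal
    (Real.mul_le_mul_log_add_exp ENNReal.toReal_nonneg _)).trans ENNReal.ofReal_add_le

section Gibbs

variable {α : Type*} [MeasurableSpace α] {μ σ : Measure α}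

lemma lintegral_ofReal_mul_log_rnDeriv_le [IsFiniteMeasure μ] [IsProbabilityMeasure σ]
    (hμσ : μ ≪ σ) (hlog : Integrable (fun x => Real.log (μ.rnDeriv σ x).toReal) μ) :
    ∫⁻ x, ENNReal.ofReal ((μ.rnDeriv σ x).toReal * Real.log (μ.rnDeriv σ x).toReal) ∂σ ≤
      ENNReal.ofReal (∫ x, Real.log (μ.rnDeriv σ x).toReal ∂μ) + 1 := by
  set L : α → ℝ := fun x => (μ.rnDeriv σ x).toReal * Real.log (μ.rnDeriv σ x).toReal
  have hL : Integrable L σ := (integrable_toReal_rnDeriv_mul_iff hμσ).2 hlog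
  have hL1 : 0 ≤ᵐ[σ] fun x => L x + 1 := Filter.Eventually.of_forall fun x => by
    show 0 ≤ L x + 1
    linarith [Real.self_sub_one_le_mul_log (μ.rnDeriv σ x).toReal_nonneg,
      (μ.rnDeriv σ x).toReal_nonneg]
  calc ∫⁻ x, ENNReal.ofReal (L x) ∂σ ≤ ∫⁻ x, ENNReal.ofReal (L x + 1) ∂σ :=
        lintegral_mono fun x => ENNReal.ofReal_le_ofReal (by linarith)
    _ = ENNReal.ofReal (∫ x, L x ∂σ + 1) := by
        rw [← ofReal_integral_eq_lintegral_ofReal (f := fun x => L x + 1)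
          (hL.add (integrable_const 1)) hL1, integral_add hL (integrable_const 1),
          integral_const, probReal_univ, one_smul]
    _ ≤ _ := by
        rw [integral_toReal_rnDeriv_mul hμσ, ← ENNReal.ofReal_one]
        exact ENNReal.ofReal_add_le

/-- A weak form of the Gibbs variational principle `∫ G dμ ≤ D(μ‖σ) + log ∫ exp G dσ`. -/
lemma lintegral_le_relEnt_add_lintegral_exp [IsFiniteMeasure μ] [IsProbabilityMeasure σ]
    {G : α → ℝ≥0∞} (hG : AEMeasurable G σ) :
    ∫⁻ x, G x ∂μ ≤ relEnt μ σ + 1 + ∫⁻ x, EReal.exp (G x) ∂σ := by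
  unfold relEnt
  split_ifs with h
  swap
  · simp
  obtain ⟨hμσ, hlog⟩ := h
  set f := μ.rnDeriv σ
  have hf := (μ.measurable_rnDeriv σ).ennreal_toReal
  calc ∫⁻ x, G x ∂μ = ∫⁻ x, f x * G x ∂σ := (lintegral_rnDeriv_mul hμσ hG).symm
    _ ≤ ∫⁻ x, (ENNReal.ofReal ((f x).toReal * Real.log (f x).toReal) + EReal.exp (G x)) ∂σ := by
        refine lintegral_mono_ae ?_
        filter_upwards [μ.rnDeriv_lt_top σ] with x hx
        exact ENNReal.mul_le_ofReal_mul_log_add_exp hx.ne _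
    _ = ∫⁻ x, ENNReal.ofReal ((f x).toReal * Real.log (f x).toReal) ∂σ
          + ∫⁻ x, EReal.exp (G x) ∂σ :=
        lintegral_add_left (hf.mul (Real.measurable_log.comp hf)).ennreal_ofReal _
    _ ≤ _ := by gcongr; exact lintegral_ofReal_mul_log_rnDeriv_le hμσ hlog

end Gibbs

section Jensen

variable {α : Type*} [MeasurableSpace α] {ν : Measure α}

/-- The tangent line `exp t ≥ exp m * (1 + t - m)`, rearranged to avoid subtraction in `ℝ≥0∞`. -/
lemma ENNReal.ofReal_exp_mul_one_add_le {m : ℝ} (hm : 0 ≤ m) (t : ℝ≥0∞) :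
    ENNReal.ofReal (Real.exp m) * (1 + t) ≤ EReal.exp t + ENNReal.ofReal (Real.exp m * m) := by
  rcases eq_or_ne t ⊤ with rfl | ht
  · simp
  rw [EReal.exp_coe_ennreal_of_ne_top ht, ← ENNReal.ofReal_toReal ht, ← ENNReal.ofReal_one,
    ← ENNReal.ofReal_add zero_le_one ENNReal.toReal_nonneg,
    ← ENNReal.ofReal_mul (Real.exp_pos m).le, ← ENNReal.ofReal_add (by positivity) (by positivity),
    ENNReal.toReal_ofReal ENNReal.toReal_nonneg]
  refine ENNReal.ofReal_le_ofReal ?_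
  have h := Real.add_one_le_exp (t.toReal - m)
  rw [Real.exp_sub, le_div_iff₀ (Real.exp_pos m)] at h
  linarith

lemma ofReal_exp_mul_add_lintegral_le {m : ℝ} (hm : 0 ≤ m) (g : α → ℝ≥0∞) :
    ENNReal.ofReal (Real.exp m) * (ν univ + ∫⁻ x, g x ∂ν) ≤
      ∫⁻ x, EReal.exp (g x) ∂ν + ENNReal.ofReal (Real.exp m * m) * ν univ :=
  calc ENNReal.ofReal (Real.exp m) * (ν univ + ∫⁻ x, g x ∂ν)
      = ∫⁻ x, ENNReal.ofReal (Real.exp m) * (1 + g x) ∂ν := by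
        rw [lintegral_const_mul' _ _ ENNReal.ofReal_ne_top, lintegral_add_left measurable_const,
          lintegral_const, one_mul]
    _ ≤ ∫⁻ x, (EReal.exp (g x) + ENNReal.ofReal (Real.exp m * m)) ∂ν :=
        lintegral_mono fun x => ENNReal.ofReal_exp_mul_one_add_le hm (g x)
    _ = _ := by rw [lintegral_add_right _ measurable_const, lintegral_const]

/-- Jensen's inequality for `exp` and a sub-probability measure `ν`: the defect `1 - ν univ` acts
as mass placed where `g = 0`. -/
lemma exp_lintegral_le_one_add_lintegral_exp (hν : ν univ ≤ 1) (g : α → ℝ≥0∞) :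
    EReal.exp (∫⁻ x, g x ∂ν) ≤ 1 + ∫⁻ x, EReal.exp (g x) ∂ν := by
  rcases eq_or_ne (∫⁻ x, EReal.exp (g x) ∂ν) ⊤ with hI | hI
  · simp [hI]
  have hm : ∫⁻ x, g x ∂ν ≠ ⊤ :=
    ne_top_of_le_ne_top hI (lintegral_mono fun x => EReal.le_exp_coe_ennreal (g x))
  set m := (∫⁻ x, g x ∂ν).toReal
  have hm0 : 0 ≤ m := ENNReal.toReal_nonneg
  have hint := ofReal_exp_mul_add_lintegral_le (ν := ν) hm0 g
  set I := ∫⁻ x, EReal.exp (g x) ∂ν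
  set p := ν.real univ
  have hp0 : 0 ≤ p := measureReal_nonneg
  have hp1 : p ≤ 1 := ENNReal.toReal_le_of_le_ofReal zero_le_one (by simpa using hν)
  rw [← ofReal_measureReal (ne_top_of_le_ne_top ENNReal.one_ne_top hν),
    ← ENNReal.ofReal_toReal hm, ← ENNReal.ofReal_toReal hI,
    ← ENNReal.ofReal_add hp0 hm0, ← ENNReal.ofReal_mul (Real.exp_pos m).le,
    ← ENNReal.ofReal_mul (by positivity),
    ← ENNReal.ofReal_add ENNReal.toReal_nonneg (by positivity),
    ENNReal.ofReal_le_ofReal_iff (by positivity)] at hint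
  rw [EReal.exp_coe_ennreal_of_ne_top hm, ← ENNReal.ofReal_toReal hI, ← ENNReal.ofReal_one,
    ← ENNReal.ofReal_add zero_le_one ENNReal.toReal_nonneg]
  refine ENNReal.ofReal_le_ofReal ?_
  have htan : Real.exp m * (1 - m) ≤ 1 :=
    calc Real.exp m * (1 - m) ≤ Real.exp m * Real.exp (-m) := by
          gcongr; linarith [Real.add_one_le_exp (-m)]
      _ = 1 := by rw [← Real.exp_add, add_neg_cancel, Real.exp_zero]
  nlinarith [mul_nonneg (sub_nonneg.2 hp1) (sub_nonneg.2 htan)]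

end Jensen

section LogPotential

variable {X : Type*} [PseudoMetricSpace X]

noncomputable def logKernel (x y : X) : ℝ := Real.log 2 - Real.log (dist x y)

noncomputable def logPotential [MeasurableSpace X] (μ : Measure X) (x : X) : ℝ≥0∞ :=
  ∫⁻ y, ENNReal.ofReal (logKernel x y) ∂μ

lemma logKernel_le_of_le_dist {x y : X} {δ : ℝ} (hδ : 0 < δ) (h : δ ≤ dist x y) :
    logKernel x y ≤ Real.log (2 / δ) := by
  rw [logKernel, Real.log_div two_ne_zero hδ.ne']
  linarith [Real.log_le_log hδ h]

variable [MeasurableSpace X] [OpensMeasurableSpace X] (μ : Measure X) [IsProbabilityMeasure μ]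

lemma logPotential_le_setLIntegral_ball_add (x : X) {δ : ℝ} (hδ : 0 < δ) :
    logPotential μ x ≤
      ∫⁻ y in ball x δ, ENNReal.ofReal (logKernel x y) ∂μ + ENNReal.ofReal (Real.log (2 / δ)) :=
  calc logPotential μ x
      ≤ ∫⁻ y, ((ball x δ).indicator (fun y => ENNReal.ofReal (logKernel x y)) y +
          ENNReal.ofReal (Real.log (2 / δ))) ∂μ := by
        refine lintegral_mono fun y => ?_
        by_cases hy : y ∈ ball x δ
        · simp [hy]
        · rw [indicator_of_notMem hy, zero_add]
          rw [mem_ball, not_lt, dist_comm] at hy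
          exact ENNReal.ofReal_le_ofReal (logKernel_le_of_le_dist hδ hy)
    _ = _ := by
        rw [lintegral_add_right _ measurable_const, lintegral_indicator isOpen_ball.measurableSet,
          lintegral_const, measure_univ, mul_one]

/-- The near part of the potential is controlled by Jensen's inequality for the sub-probability
measure `(a / s) • μ|_{B(x, δ)}`, the far part by `log (2 / δ)`. -/
lemma exp_mul_logPotential_le {x : X} {a s δ : ℝ} (ha : 0 ≤ a) (hs : 0 < s) (hδ0 : 0 < δ)
    (hδ2 : δ ≤ 2) (hcap : ENNReal.ofReal (a / s) * μ (ball x δ) ≤ 1) :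
    EReal.exp (ENNReal.ofReal a * logPotential μ x : ℝ≥0∞) ≤
      ENNReal.ofReal ((2 / δ) ^ a) * (1 + ENNReal.ofReal (a / s) *
        ∫⁻ y, EReal.exp (ENNReal.ofReal (s * logKernel x y)) ∂μ) := by
  set B := ball x δ
  set ν := ENNReal.ofReal (a / s) • μ.restrict B
  have hν : ν univ ≤ 1 := by simpa [ν] using hcap
  have hnear : ENNReal.ofReal a * ∫⁻ y in B, ENNReal.ofReal (logKernel x y) ∂μ =
      ∫⁻ y, ENNReal.ofReal (s * logKernel x y) ∂ν := by
    rw [lintegral_smul_measure, smul_eq_mul, ← lintegral_const_mul' _ _ ENNReal.ofReal_ne_top,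
      ← lintegral_const_mul' _ _ ENNReal.ofReal_ne_top]
    refine lintegral_congr fun y => ?_
    rw [← ENNReal.ofReal_mul ha, ← ENNReal.ofReal_mul (div_nonneg ha hs.le)]
    congr 1
    field_simp
  have hfar : EReal.exp (ENNReal.ofReal a * ENNReal.ofReal (Real.log (2 / δ)) : ℝ≥0∞) =
      ENNReal.ofReal ((2 / δ) ^ a) := by
    have hlog : 0 ≤ Real.log (2 / δ) := Real.log_nonneg (by rw [le_div_iff₀ hδ0]; linarith)
    rw [← ENNReal.ofReal_mul ha, EReal.exp_coe_ennreal_ofReal, max_eq_left (mul_nonneg ha hlog),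
      Real.rpow_def_of_pos (by positivity), mul_comm a]
  calc EReal.exp (ENNReal.ofReal a * logPotential μ x : ℝ≥0∞)
      ≤ EReal.exp (ENNReal.ofReal a * ∫⁻ y in B, ENNReal.ofReal (logKernel x y) ∂μ : ℝ≥0∞) *
          EReal.exp (ENNReal.ofReal a * ENNReal.ofReal (Real.log (2 / δ)) : ℝ≥0∞) := by
        rw [← EReal.exp_coe_ennreal_add, ← mul_add]
        exact EReal.monotone_exp_coe_ennreal
          (by gcongr; exact logPotential_le_setLIntegral_ball_add μ x hδ0)
    _ ≤ (1 + ∫⁻ y, EReal.exp (ENNReal.ofReal (s * logKernel x y)) ∂ν) *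
          ENNReal.ofReal ((2 / δ) ^ a) := by
        rw [hnear, hfar]
        gcongr
        exact exp_lintegral_le_one_add_lintegral_exp hν _
    _ ≤ _ := by
        rw [mul_comm, lintegral_smul_measure, smul_eq_mul]
        gcongr
        exact Measure.restrict_le_self

end LogPotential

lemma lintegral_ofReal_le_of_meas_lt_le {α : Type*} [MeasurableSpace α] (ν : Measure α)
    {F : α → ℝ} (hF0 : 0 ≤ F) (hFm : AEMeasurable F ν) {C : ℝ≥0∞} {p : ℝ}
    (htail : ∀ t, 1 < t → ν {x | t < F x} ≤ C * ENNReal.ofReal (t ^ (-p))) :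
    ∫⁻ x, ENNReal.ofReal (F x) ∂ν ≤ ν univ + C * ∫⁻ t in Ioi 1, ENNReal.ofReal (t ^ (-p)) := by
  rw [lintegral_eq_lintegral_meas_lt ν (ae_of_all _ hF0) hFm, ← Ioc_union_Ioi_eq_Ioi zero_le_one,
    lintegral_union measurableSet_Ioi Ioc_disjoint_Ioi_same]
  gcongr
  · calc ∫⁻ t in Ioc 0 1, ν {x | t < F x} ≤ ∫⁻ _ in Ioc (0 : ℝ) 1, ν univ :=
          lintegral_mono fun t => measure_mono (subset_univ _)
      _ = ν univ := by simp
  · calc ∫⁻ t in Ioi 1, ν {x | t < F x} ≤ ∫⁻ t in Ioi 1, C * ENNReal.ofReal (t ^ (-p)) :=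
          setLIntegral_mono' measurableSet_Ioi htail
      _ = C * ∫⁻ t in Ioi 1, ENNReal.ofReal (t ^ (-p)) :=
          lintegral_const_mul _ (measurable_id.pow_const _).ennreal_ofReal

lemma lintegral_exp_mul_logKernel_le {X : Type*} [PseudoMetricSpace X] [MeasurableSpace X]
    [OpensMeasurableSpace X] (σ : Measure X) {y : X} {A d : ℝ}
    (hball : ∀ r, 0 < r → σ (ball y r) ≤ ENNReal.ofReal (A * r ^ d)) {s : ℝ} (hs : 0 < s) :
    ∫⁻ x, EReal.exp (ENNReal.ofReal (s * logKernel x y)) ∂σ ≤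
      σ univ + ENNReal.ofReal (A * 2 ^ d) * ∫⁻ t in Ioi 1, ENNReal.ofReal (t ^ (-(d / s))) := by
  simp_rw [EReal.exp_coe_ennreal_ofReal]
  refine lintegral_ofReal_le_of_meas_lt_le σ (fun x => (Real.exp_pos _).le) ?_ fun t ht => ?_
  · unfold logKernel
    fun_prop
  -- `exp (s * logKernel x y) = (2 / dist x y) ^ s`, which exceeds `t` only if `dist x y < ρ`
  set ρ := 2 / Real.exp (Real.log t / s)
  have hρ : 0 < ρ := by positivity
  have hsub : {x | t < Real.exp (max (s * logKernel x y) 0)} ⊆ ball y ρ := by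
    intro x hx
    have hlogt : 0 < Real.log t := Real.log_pos ht
    rw [mem_ofPred_eq, ← Real.log_lt_iff_lt_exp (by linarith), lt_max_iff] at hx
    rw [mem_ball]
    by_contra! hfar
    have := logKernel_le_of_le_dist hρ hfar
    rw [div_div_cancel₀ two_ne_zero, Real.log_exp, le_div_iff₀ hs] at this
    rcases hx with hx | hx <;> linarith [mul_comm s (logKernel x y)]
  calc σ {x | t < Real.exp (max (s * logKernel x y) 0)} ≤ σ (ball y ρ) := measure_mono hsub
    _ ≤ ENNReal.ofReal (A * ρ ^ d) := hball ρ hρ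
    _ = ENNReal.ofReal (A * 2 ^ d) * ENNReal.ofReal (t ^ (-(d / s))) := by
        have ht0 : 0 < t := by linarith
        rw [← ENNReal.ofReal_mul' (Real.rpow_nonneg ht0.le _), Real.div_rpow zero_le_two
          (Real.exp_pos _).le, ← Real.exp_mul, Real.rpow_def_of_pos ht0, div_eq_mul_inv,
          ← Real.exp_neg]
        ring_nf

section ExpMoment

variable {X : Type*} [PseudoMetricSpace X] [SecondCountableTopology X] [MeasurableSpace X]
  [BorelSpace X]

lemma measurable_logKernel : Measurable fun p : X × X => logKernel p.1 p.2 := by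
  unfold logKernel
  fun_prop

lemma measurable_logPotential (μ : Measure X) [SFinite μ] : Measurable (logPotential μ) :=
  measurable_logKernel.ennreal_ofReal.lintegral_prod_right'

lemma lintegral_exp_mul_logPotential_le (σ μ : Measure X) [IsProbabilityMeasure σ]
    [IsProbabilityMeasure μ] {C : ℝ≥0∞} {a s δ : ℝ} (ha : 0 ≤ a) (hs : 0 < s)
    (hδ0 : 0 < δ) (hδ2 : δ ≤ 2) (hcap : ∀ᵐ x ∂σ, ENNReal.ofReal (a / s) * μ (ball x δ) ≤ 1)
    (hkernel : ∀ᵐ y ∂μ, ∫⁻ x, EReal.exp (ENNReal.ofReal (s * logKernel x y)) ∂σ ≤ C) :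
    ∫⁻ x, EReal.exp (ENNReal.ofReal a * logPotential μ x : ℝ≥0∞) ∂σ ≤
      ENNReal.ofReal ((2 / δ) ^ a) * (1 + ENNReal.ofReal (a / s) * C) := by
  have hm : Measurable fun p : X × X => EReal.exp (ENNReal.ofReal (s * logKernel p.1 p.2)) :=
    EReal.measurable_exp.comp (measurable_coe_ennreal_ereal.comp
      (measurable_logKernel.const_mul s).ennreal_ofReal)
  calc ∫⁻ x, EReal.exp (ENNReal.ofReal a * logPotential μ x : ℝ≥0∞) ∂σ
      ≤ ∫⁻ x, ENNReal.ofReal ((2 / δ) ^ a) * (1 + ENNReal.ofReal (a / s) *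
          ∫⁻ y, EReal.exp (ENNReal.ofReal (s * logKernel x y)) ∂μ) ∂σ := by
        refine lintegral_mono_ae ?_
        filter_upwards [hcap] with x hx
        exact exp_mul_logPotential_le μ ha hs hδ0 hδ2 hx
    _ = ENNReal.ofReal ((2 / δ) ^ a) * (1 + ENNReal.ofReal (a / s) *
          ∫⁻ y, ∫⁻ x, EReal.exp (ENNReal.ofReal (s * logKernel x y)) ∂σ ∂μ) := by
        rw [lintegral_const_mul' _ _ ENNReal.ofReal_ne_top, lintegral_add_left measurable_const,
          lintegral_const_mul' _ _ ENNReal.ofReal_ne_top, lintegral_lintegral_swap hm.aemeasurable]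
        simp
    _ ≤ ENNReal.ofReal ((2 / δ) ^ a) * (1 + ENNReal.ofReal (a / s) * C) := by
        gcongr
        calc ∫⁻ y, ∫⁻ x, EReal.exp (ENNReal.ofReal (s * logKernel x y)) ∂σ ∂μ
            ≤ ∫⁻ _, C ∂μ := lintegral_mono_ae hkernel
          _ = C := by simp

end ExpMoment

section Barycenter

variable {E : Type*} [NormedAddCommGroup E] [InnerProductSpace ℝ E] [CompleteSpace E]
  [SecondCountableTopology E] [MeasurableSpace E] [BorelSpace E]

lemma measureReal_ball_le_of_integral_eq_zero (μ : Measure E) [IsProbabilityMeasure μ]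
    (hμ : ∀ᵐ y ∂μ, y ∈ sphere (0 : E) 1) (hbar : ∫ y, y ∂μ = 0)
    {x : E} (hx : x ∈ sphere (0 : E) 1) (δ : ℝ) :
    (4 - δ ^ 2) * μ.real (ball x δ) ≤ 2 := by
  rw [mem_sphere_zero_iff_norm] at hx
  set B := ball x δ
  have hid : Integrable (fun y : E => y) μ := Integrable.of_bound aestronglyMeasurable_id 1
    (hμ.mono fun y hy => (mem_sphere_zero_iff_norm.1 hy).le)
  have hinner : Integrable (fun y => 2 - 2 * inner ℝ x y) μ :=
    (integrable_const 2).sub ((hid.const_inner x).const_mul 2)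
  have hind : Integrable (fun y => 4 - (4 - δ ^ 2) * B.indicator 1 y) μ :=
    (integrable_const 4).sub (((integrable_const 1).indicator measurableSet_ball).const_mul _)
  -- `2 - 2 ⟪x, y⟫ = ‖x - y‖ ^ 2`, which is `< δ ^ 2` on `B` and `≤ 4` everywhere
  have hpt : ∀ᵐ y ∂μ, 2 - 2 * inner ℝ x y ≤ 4 - (4 - δ ^ 2) * B.indicator 1 y := by
    filter_upwards [hμ] with y hy
    rw [mem_sphere_zero_iff_norm] at hy
    have hsq : ‖x - y‖ ^ 2 = 2 - 2 * inner ℝ x y := by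
      rw [@norm_sub_sq_real, hx, hy]; ring
    have h4 : ‖x - y‖ ≤ 2 := (norm_sub_le x y).trans (by rw [hx, hy]; norm_num)
    by_cases hyB : y ∈ B
    · have hδ : ‖x - y‖ < δ := by rw [← dist_eq_norm, dist_comm]; exact hyB
      simp only [indicator_of_mem hyB, Pi.one_apply]
      nlinarith [norm_nonneg (x - y)]
    · simp only [indicator_of_notMem hyB]
      nlinarith [norm_nonneg (x - y)]
  have := integral_mono_ae hinner hind hpt
  rw [integral_sub (integrable_const _) ((hid.const_inner x).const_mul 2), integral_const_mul,
    integral_inner hid, hbar, inner_zero_right, integral_sub (integrable_const _)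
    (((integrable_const 1).indicator measurableSet_ball).const_mul _), integral_const_mul,
    integral_indicator_one measurableSet_ball] at this
  simp only [integral_const, probReal_univ, one_smul] at this
  linarith

lemma exists_radius_ofReal_mul_measure_ball_le_one {a s : ℝ} (ha : 0 ≤ a) (hs : 0 < s)
    (has : a < 2 * s) :
    ∃ δ, 0 < δ ∧ δ ≤ 2 ∧ ∀ (μ : Measure E) [IsProbabilityMeasure μ],
      (∀ᵐ y ∂μ, y ∈ sphere (0 : E) 1) → ∫ y, y ∂μ = 0 →
      ∀ x ∈ sphere (0 : E) 1, ENNReal.ofReal (a / s) * μ (ball x δ) ≤ 1 := by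
  have hpos : 0 < 1 - a / (2 * s) := by rw [sub_pos, div_lt_one (by positivity)]; exact has
  refine ⟨2 * √(1 - a / (2 * s)), by positivity, ?_, fun μ _ hμ hbar x hx => ?_⟩
  · have : √(1 - a / (2 * s)) ≤ 1 :=
      Real.sqrt_le_one.2 (by linarith [div_nonneg ha (by positivity : (0 : ℝ) ≤ 2 * s)])
    linarith
  have hconc := measureReal_ball_le_of_integral_eq_zero μ hμ hbar hx (2 * √(1 - a / (2 * s)))
  have h4 : 4 - (2 * √(1 - a / (2 * s))) ^ 2 = 2 * (a / s) := by
    rw [mul_pow, Real.sq_sqrt hpos.le]; field_simp; ring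
  rw [h4, mul_assoc] at hconc
  rw [← ofReal_measureReal, ← ENNReal.ofReal_mul (div_nonneg ha hs.le)]
  exact ENNReal.ofReal_le_one.2 (by linarith)

end Barycenter

lemma measure_ball_eq_of_norm_eq {E : Type*} [NormedAddCommGroup E] [InnerProductSpace ℝ E]
    [MeasurableSpace E] [BorelSpace E] {σ : Measure E}
    (hσ : ∀ R : E ≃ₗᵢ[ℝ] E, σ.map R = σ) {p q : E} (h : ‖p‖ = ‖q‖) (r : ℝ) :
    σ (ball p r) = σ (ball q r) := by
  set R : E ≃ₗᵢ[ℝ] E := (ℝ ∙ (p - q))ᗮ.reflection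
  have hRp : R p = q := Submodule.reflection_sub h
  have hpre : R ⁻¹' ball q r = ball p r := by
    ext y
    simp [← hRp]
  conv_rhs => rw [← hσ R]
  rw [Measure.map_apply R.continuous.measurable measurableSet_ball, hpre]

lemma card_mul_le_measure_univ_of_pairwise_dist {X ι : Type*} [PseudoMetricSpace X]
    [MeasurableSpace X] [OpensMeasurableSpace X] (ν : Measure X) (s : Finset ι) (c : ι → X)
    {r : ℝ} (hsep : (s : Set ι).Pairwise fun i j => 2 * r ≤ dist (c i) (c j))
    {m : ℝ≥0∞} (hm : ∀ i ∈ s, m ≤ ν (ball (c i) r)) :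
    s.card * m ≤ ν univ := by
  have hdisj : (s : Set ι).PairwiseDisjoint fun i => ball (c i) r :=
    fun i hi j hj hij => ball_disjoint_ball (by linarith [hsep hi hj hij])
  calc s.card * m = ∑ i ∈ s, m := by rw [Finset.sum_const, nsmul_eq_mul]
    _ ≤ ∑ i ∈ s, ν (ball (c i) r) := Finset.sum_le_sum hm
    _ = ν (⋃ i ∈ s, ball (c i) r) :=
        (measure_biUnion_finset hdisj fun _ _ => measurableSet_ball).symm
    _ ≤ ν univ := measure_mono (subset_univ _)

noncomputable def spherePoint (a b : ℝ) : E3 := !₂[a, b, √(1 - a ^ 2 - b ^ 2)]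

lemma norm_spherePoint {a b : ℝ} (h : a ^ 2 + b ^ 2 ≤ 1) : ‖spherePoint a b‖ = 1 := by
  rw [EuclideanSpace.norm_eq, Fin.sum_univ_three]
  simp [spherePoint, Real.sq_sqrt (by linarith : 0 ≤ 1 - a ^ 2 - b ^ 2)]

lemma max_abs_sub_le_dist_spherePoint (a b a' b' : ℝ) :
    max |a - a'| |b - b'| ≤ dist (spherePoint a b) (spherePoint a' b') := by
  have h0 := PiLp.dist_apply_le (spherePoint a b) (spherePoint a' b') 0
  have h1 := PiLp.dist_apply_le (spherePoint a b) (spherePoint a' b') 1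
  simp only [spherePoint, Real.dist_eq] at h0 h1
  exact max_le h0 h1

lemma one_le_abs_natCast_sub {j k : ℕ} (h : j ≠ k) : (1 : ℝ) ≤ |(j : ℝ) - k| := by
  have : (1 : ℤ) ≤ |(j : ℤ) - k| := Int.one_le_abs (by omega)
  exact_mod_cast this

/-- The balls of radius `r` around the `⌈1 / 8r⌉²` points `spherePoint (2rj) (2rk)`, `j, k < n`,
are disjoint and, by rotation invariance, all have the measure of `B(p, r)`. -/
lemma measure_ball_le_of_forall_map_eq {σ : Measure E3} [IsProbabilityMeasure σ]
    (hσ : ∀ R : E3 ≃ₗᵢ[ℝ] E3, σ.map R = σ) {p : E3} (hp : ‖p‖ = 1) {r : ℝ} (hr : 0 < r) :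
    σ (ball p r) ≤ ENNReal.ofReal (64 * r ^ 2) := by
  set n := ⌈1 / (8 * r)⌉₊
  have hn : 1 / (8 * r) ≤ n := Nat.le_ceil _
  have hn' : (n : ℝ) < 1 / (8 * r) + 1 := Nat.ceil_lt_add_one (by positivity)
  have hcoord : ∀ j < n, 0 ≤ 2 * r * j ∧ 2 * r * j ≤ 1 / 4 := fun j hj => by
    refine ⟨by positivity, ?_⟩
    have : (j : ℝ) + 1 ≤ n := by exact_mod_cast hj
    have : 2 * r * (1 / (8 * r)) = 1 / 4 := by field_simp; norm_num
    nlinarith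
  set s := Finset.range n ×ˢ Finset.range n
  set c : ℕ × ℕ → E3 := fun jk => spherePoint (2 * r * jk.1) (2 * r * jk.2)
  have hsep : (s : Set (ℕ × ℕ)).Pairwise fun i j => 2 * r ≤ dist (c i) (c j) := by
    rintro ⟨j, k⟩ - ⟨j', k'⟩ - hne
    have h1 : 1 ≤ max |(j : ℝ) - j'| |(k : ℝ) - k'| := by
      by_cases hj : j = j'
      · exact le_max_of_le_right (one_le_abs_natCast_sub fun hk => hne (by rw [hj, hk]))
      · exact le_max_of_le_left (one_le_abs_natCast_sub hj)
    calc 2 * r ≤ 2 * r * max |(j : ℝ) - j'| |(k : ℝ) - k'| :=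
          le_mul_of_one_le_right (by positivity) h1
      _ = max |2 * r * j - 2 * r * j'| |2 * r * k - 2 * r * k'| := by
        rw [mul_max_of_nonneg _ _ (by positivity), ← mul_sub, ← mul_sub, abs_mul (2 * r),
          abs_mul (2 * r), abs_of_pos (by positivity : 0 < 2 * r)]
      _ ≤ dist (c (j, k)) (c (j', k')) := max_abs_sub_le_dist_spherePoint _ _ _ _
  have hball : ∀ i ∈ s, σ (ball p r) ≤ σ (ball (c i) r) := by
    rintro ⟨j, k⟩ hjk
    simp only [s, Finset.mem_product, Finset.mem_range] at hjk
    obtain ⟨hj0, hj1⟩ := hcoord j hjk.1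
    obtain ⟨hk0, hk1⟩ := hcoord k hjk.2
    refine (measure_ball_eq_of_norm_eq hσ (q := c (j, k)) ?_ r).le
    rw [hp, norm_spherePoint (by nlinarith)]
  have hpack := card_mul_le_measure_univ_of_pairwise_dist σ s c hsep hball
  rw [measure_univ, Finset.card_product, Finset.card_range, Nat.cast_mul, ← sq] at hpack
  have hn2 : 1 ≤ 64 * r ^ 2 * (n : ℝ) ^ 2 := by
    have : 1 ≤ 8 * r * n := by rwa [div_le_iff₀' (by positivity)] at hn
    nlinarith
  calc σ (ball p r) ≤ ENNReal.ofReal (64 * r ^ 2 * (n : ℝ) ^ 2) * σ (ball p r) :=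
        le_mul_of_one_le_left zero_le (by simpa using ENNReal.ofReal_le_ofReal hn2)
    _ = ENNReal.ofReal (64 * r ^ 2) * (n ^ 2 * σ (ball p r)) := by
        rw [ENNReal.ofReal_mul (by positivity), ENNReal.ofReal_pow (Nat.cast_nonneg n),
          ENNReal.ofReal_natCast, mul_assoc]
    _ ≤ ENNReal.ofReal (64 * r ^ 2) := mul_le_of_le_one_right zero_le hpack

lemma exists_forall_lintegral_exp_mul_logKernel_le {σ : Measure E3} [IsProbabilityMeasure σ]
    (hσ : ∀ R : E3 ≃ₗᵢ[ℝ] E3, σ.map R = σ) {s : ℝ} (hs0 : 0 < s) (hs2 : s < 2) :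
    ∃ C ≠ ⊤, ∀ y ∈ sphere (0 : E3) 1,
      ∫⁻ x, EReal.exp (ENNReal.ofReal (s * logKernel x y)) ∂σ ≤ C := by
  have hT : ∫⁻ t in Ioi 1, ENNReal.ofReal (t ^ (-(2 / s))) ≠ ⊤ :=
    (integrableOn_Ioi_rpow_of_lt (by rw [neg_lt_neg_iff, lt_div_iff₀ hs0]; linarith)
      one_pos).lintegral_lt_top.ne
  refine ⟨1 + ENNReal.ofReal (64 * 2 ^ (2 : ℝ)) * ∫⁻ t in Ioi 1, ENNReal.ofReal (t ^ (-(2 / s))),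
    by simp [hT, ENNReal.mul_eq_top], fun y hy => ?_⟩
  have hball (r : ℝ) (hr : 0 < r) : σ (ball y r) ≤ ENNReal.ofReal (64 * r ^ (2 : ℝ)) := by
    rw [Real.rpow_two]
    exact measure_ball_le_of_forall_map_eq hσ (mem_sphere_zero_iff_norm.1 hy) hr
  exact (lintegral_exp_mul_logKernel_le σ hball hs0).trans_eq (by rw [measure_univ])

/-- **Strengthened logarithmic Hardy–Littlewood–Sobolev inequality on the two-sphere.**
Let `σ` be the (unique) rotation-invariant Borel probability measure on the unit sphere
`S² ⊂ ℝ³`. For each `γ ∈ (0,2)` there is a constant `C_γ` such that every Borel probability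
measure `μ` on `S²` with vanishing barycenter `∫ x dμ = 0` satisfies
`2γ ∬ log(1/|x-y|) dμ dμ ≤ D(μ‖σ) + C_γ`. (Stated in `ℝ≥0∞` by shifting the kernel to the
nonnegative kernel `log 2 - log |x-y|`, which transfers the constant to `2γ log 2 + C`.) -/
theorem strengthened_log_HLS
    (σ : Measure E3) (hσ1 : IsProbabilityMeasure σ)
    (hσs : σ (Metric.sphere (0 : E3) 1) = 1)
    (hσinv : ∀ R : E3 ≃ₗᵢ[ℝ] E3, σ.map R = σ)
    (γ : ℝ) (hγ0 : 0 < γ) (hγ2 : γ < 2) :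
    ∃ C : ℝ, ∀ μ : Measure E3, IsProbabilityMeasure μ →
      μ (Metric.sphere (0 : E3) 1) = 1 → (∫ x, x ∂μ) = 0 →
      ENNReal.ofReal (2 * γ) *
          (∫⁻ p : E3 × E3,
            ENNReal.ofReal (Real.log 2 - Real.log (dist p.1 p.2)) ∂(μ.prod μ)) ≤
        relEnt μ σ + ENNReal.ofReal (2 * γ * Real.log 2 + C) := by
  set s := 1 + γ / 2 with hs
  obtain ⟨δ, hδ0, hδ2, hcap⟩ := exists_radius_ofReal_mul_measure_ball_le_one (E := E3)
    (by positivity : 0 ≤ 2 * γ) (by positivity : 0 < s) (by linarith [hs])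
  obtain ⟨C, hC, hkernel⟩ := exists_forall_lintegral_exp_mul_logKernel_le hσinv
    (by positivity : 0 < s) (by linarith [hs])
  set K := ENNReal.ofReal ((2 / δ) ^ (2 * γ)) * (1 + ENNReal.ofReal (2 * γ / s) * C)
  have hK : K ≠ ⊤ := by simp [K, hC, ENNReal.mul_eq_top]
  refine ⟨(1 + K).toReal - 2 * γ * Real.log 2, fun μ hμ hμS hbar => ?_⟩
  have hσae := (mem_ae_iff_prob_eq_one isClosed_sphere.measurableSet).2 hσs
  have hμae := (mem_ae_iff_prob_eq_one isClosed_sphere.measurableSet).2 hμS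
  rw [add_sub_cancel, ENNReal.ofReal_toReal (by simpa using hK), ← add_assoc]
  calc ENNReal.ofReal (2 * γ) * ∫⁻ p : E3 × E3, ENNReal.ofReal (logKernel p.1 p.2) ∂(μ.prod μ)
      = ∫⁻ x, ENNReal.ofReal (2 * γ) * logPotential μ x ∂μ := by
        rw [lintegral_prod _ measurable_logKernel.ennreal_ofReal.aemeasurable,
          lintegral_const_mul _ (measurable_logPotential μ)]
        rfl
    _ ≤ relEnt μ σ + 1 + ∫⁻ x, EReal.exp (ENNReal.ofReal (2 * γ) * logPotential μ x : ℝ≥0∞) ∂σ :=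
        lintegral_le_relEnt_add_lintegral_exp
          ((measurable_logPotential μ).const_mul _).aemeasurable
    _ ≤ relEnt μ σ + 1 + K := by
        gcongr
        refine lintegral_exp_mul_logPotential_le σ μ (by positivity) (by positivity) hδ0 hδ2 ?_ ?_
        · filter_upwards [hσae] with x hx using hcap μ hμae hbar x hx
        · filter_upwards [hμae] with y hy using hkernel y hy
end

section
/- Let N ≥ 4 be an integer and set e := 4/(N−1). Let z₁,…,z_N ∈ ℂ be pairwise distinct and define, for 4 ≤ ℓ ≤ N, the cross-ratios y_ℓ := (z₁−z₂)(z_ℓ−z₃) / ((z₁−z₃)(z_ℓ−z₂)). Then the following identity of positive real numbers holds: ∏_{1≤i<j≤N} |z_i−z_j|^{−e} = |(z₁−z₂)(z₁−z₃)(z₂−z₃)|^{−2} · ∏_{4≤i<j≤N} |y_i−y_j|^{−e} · ∏_{ℓ=4}^{N} |y_ℓ|^{−e} |1−y_ℓ|^{−e} · ∏_{ℓ=4}^{N} ( |z₁−z₂| |z₂−z₃| / ( |z₁−z₃| |z_ℓ−z₂|² ) )². -/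
/-!
The map `w ↦ y(w) = (z₁ - z₂)(w - z₃) / ((z₁ - z₃)(w - z₂))` is a Möbius transformation sending
`z₃, z₁, z₂` to `0, 1, ∞`, so `y_ℓ`, `1 - y_ℓ` and `y_i - y_j` are explicit multiples of
`z_ℓ - z₃`, `z_ℓ - z₁` and `(z_i - z_j) / ((z_i - z₂)(z_j - z₂))`. Substituting, both sides become
products of powers of the distances `|z_i - z_j|`, and the exponents agree because
`e (N - 1) = 4`: the pairs inside `{z₄, …, z_N}` contribute the constant `|κ|^{-e}`,
`κ = (z₁ - z₂)(z₂ - z₃)/(z₁ - z₃)`, which is split evenly between the two ends of each pair so that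
it is absorbed pointwise together with the powers of `|z_ℓ - z₂|`.
-/

open Finset Real

section CrossRatio

variable {𝕜 : Type*} [NormedField 𝕜] {z₁ z₂ z₃ x x' : 𝕜}

def crossRatio (z₁ z₂ z₃ x : 𝕜) : 𝕜 := (z₁ - z₂) * (x - z₃) / ((z₁ - z₃) * (x - z₂))

theorem norm_crossRatio (z₁ z₂ z₃ x : 𝕜) :
    ‖crossRatio z₁ z₂ z₃ x‖ = ‖z₁ - z₂‖ * ‖z₃ - x‖ / (‖z₁ - z₃‖ * ‖z₂ - x‖) := by
  rw [crossRatio, norm_div, norm_mul, norm_mul, norm_sub_rev x, norm_sub_rev x]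

theorem norm_one_sub_crossRatio (h₁₃ : z₁ ≠ z₃) (hx : x ≠ z₂) :
    ‖1 - crossRatio z₁ z₂ z₃ x‖ = ‖z₂ - z₃‖ * ‖z₁ - x‖ / (‖z₁ - z₃‖ * ‖z₂ - x‖) := by
  have h : 1 - crossRatio z₁ z₂ z₃ x = (z₂ - z₃) * (z₁ - x) / ((z₁ - z₃) * (z₂ - x)) := by
    rw [crossRatio]
    field_simp [sub_ne_zero.2 h₁₃, sub_ne_zero.2 hx, sub_ne_zero.2 hx.symm]
    ring
  rw [h, norm_div, norm_mul, norm_mul]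

theorem norm_crossRatio_sub_crossRatio (h₁₃ : z₁ ≠ z₃) (hx : x ≠ z₂) (hx' : x' ≠ z₂) :
    ‖crossRatio z₁ z₂ z₃ x - crossRatio z₁ z₂ z₃ x'‖ =
      ‖z₁ - z₂‖ * ‖z₂ - z₃‖ * ‖x - x'‖ / (‖z₁ - z₃‖ * (‖z₂ - x‖ * ‖z₂ - x'‖)) := by
  have h : crossRatio z₁ z₂ z₃ x - crossRatio z₁ z₂ z₃ x' =
      (z₁ - z₂) * (z₂ - z₃) * (x' - x) / ((z₁ - z₃) * ((z₂ - x) * (z₂ - x'))) := by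
    rw [crossRatio, crossRatio]
    field_simp [sub_ne_zero.2 h₁₃, sub_ne_zero.2 hx, sub_ne_zero.2 hx', sub_ne_zero.2 hx.symm,
      sub_ne_zero.2 hx'.symm]
    ring
  rw [h, norm_div, norm_mul, norm_mul, norm_mul, norm_mul, norm_sub_rev x']

end CrossRatio

namespace Finset

variable {ι M : Type*} [LinearOrder ι] [CommMonoid M]

def ltPairs (s : Finset ι) : Finset (ι × ι) := (s ×ˢ s).filter fun p => p.1 < p.2

theorem mem_ltPairs {s : Finset ι} {p : ι × ι} : p ∈ ltPairs s ↔ p.1 ∈ s ∧ p.2 ∈ s ∧ p.1 < p.2 := by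
  simp [ltPairs, and_assoc]

theorem ltPairs_univ [Fintype ι] : ltPairs (univ : Finset ι) = univ.filter fun p => p.1 < p.2 := by
  rw [ltPairs, univ_product_univ]

theorem prod_ltPairs_insert {x : ι} {s : Finset ι} (hx : ∀ y ∈ s, x < y) (f : ι × ι → M) :
    ∏ p ∈ ltPairs (insert x s), f p = (∏ y ∈ s, f (x, y)) * ∏ p ∈ ltPairs s, f p := by
  have hxs : x ∉ s := fun h => lt_irrefl x (hx x h)
  simp only [ltPairs, prod_filter, prod_product, prod_insert hxs, lt_irrefl, if_false, one_mul]
  congr 1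
  · exact prod_congr rfl fun y hy => if_pos (hx y hy)
  · exact prod_congr rfl fun y hy => by rw [if_neg (hx y hy).not_gt, one_mul]

theorem prod_ltPairs_mul (s : Finset ι) (g : ι → M) :
    ∏ p ∈ ltPairs s, g p.1 * g p.2 = ∏ i ∈ s, g i ^ (#s - 1) := by
  induction s using Finset.induction_on_min with
  | empty => rfl
  | insert x s hx ih =>
    have hxs : x ∉ s := fun h => lt_irrefl x (hx x h)
    rw [prod_ltPairs_insert hx, ih]
    dsimp only
    rw [prod_mul_distrib, prod_const, prod_insert hxs, card_insert_of_notMem hxs,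
      Nat.add_sub_cancel, mul_assoc, ← prod_mul_distrib]
    congr 1
    refine prod_congr rfl fun i hi => ?_
    rw [← pow_succ', Nat.sub_add_cancel (card_pos.2 ⟨i, hi⟩)]

theorem prod_ltPairs_insert_three {x₀ x₁ x₂ : ι} {s : Finset ι} (h₀₁ : x₀ < x₁) (h₁₂ : x₁ < x₂)
    (hs : ∀ y ∈ s, x₂ < y) (f : ι × ι → M) :
    ∏ p ∈ ltPairs (insert x₀ (insert x₁ (insert x₂ s))), f p =
      f (x₀, x₁) * f (x₀, x₂) * f (x₁, x₂) *
        (∏ y ∈ s, f (x₀, y) * f (x₁, y) * f (x₂, y)) * ∏ p ∈ ltPairs s, f p := by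
  have h₁ : ∀ y ∈ insert x₂ s, x₁ < y := by
    simpa [h₁₂] using fun y hy => h₁₂.trans (hs y hy)
  have h₀ : ∀ y ∈ insert x₁ (insert x₂ s), x₀ < y := by
    simpa [h₀₁] using fun y hy => h₀₁.trans (h₁ y hy)
  rw [prod_ltPairs_insert h₀, prod_ltPairs_insert h₁, prod_ltPairs_insert hs,
    prod_insert fun h => lt_irrefl _ (h₁ _ h), prod_insert fun h => lt_irrefl _ (hs _ h),
    prod_insert fun h => lt_irrefl _ (hs _ h), prod_mul_distrib, prod_mul_distrib]
  ac_rfl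

end Finset

-- Writing each positive quantity as the exponential of its logarithm makes the identity linear.
theorem rpow_pair_weight_eq {a b c d v v' : ℝ} (ha : 0 < a) (hb : 0 < b) (hc : 0 < c)
    (hd : 0 < d) (hv : 0 < v) (hv' : 0 < v') (E : ℝ) :
    (a * c * d / (b * (v * v'))) ^ E =
      d ^ E * ((a * c / b) ^ (E / 2) * v ^ (-E) * ((a * c / b) ^ (E / 2) * v' ^ (-E))) := by
  rw [← exp_log ha, ← exp_log hb, ← exp_log hc, ← exp_log hd, ← exp_log hv, ← exp_log hv']
  simp only [← exp_add, ← exp_sub, ← exp_mul, exp_eq_exp]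
  ring

theorem rpow_point_weight_eq {a b c u v w : ℝ} (ha : 0 < a) (hb : 0 < b) (hc : 0 < c)
    (hu : 0 < u) (hv : 0 < v) (hw : 0 < w) {E : ℝ} {n : ℕ} (hE : E * (n + 3) = -4) :
    ((a * c / b) ^ (E / 2) * v ^ (-E)) ^ n * ((a * w / (b * v)) ^ E * (c * u / (b * v)) ^ E) *
        (a * c / (b * v ^ 2)) ^ 2 = (a * b * c) ^ (-E / 2) * (u ^ E * v ^ E * w ^ E) := by
  rw [← exp_log ha, ← exp_log hb, ← exp_log hc, ← exp_log hu, ← exp_log hv, ← exp_log hw]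
  simp only [← exp_add, ← exp_sub, ← exp_mul, ← exp_nat_mul, exp_eq_exp]
  linear_combination (log a / 2 - log b / 2 + log c / 2 - log v) * hE

theorem prod_rpow_eq_crossRatio_form {ι : Type*} [LinearOrder ι] (S : Finset ι) {E : ℝ}
    (hE : E * (#S + 2) = -4) {a b c : ℝ} (ha : 0 < a) (hb : 0 < b) (hc : 0 < c)
    {u v w : ι → ℝ} {d : ι × ι → ℝ} (hu : ∀ ℓ ∈ S, 0 < u ℓ) (hv : ∀ ℓ ∈ S, 0 < v ℓ)
    (hw : ∀ ℓ ∈ S, 0 < w ℓ) (hd : ∀ p ∈ ltPairs S, 0 < d p) :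
    a ^ E * b ^ E * c ^ E * (∏ ℓ ∈ S, u ℓ ^ E * v ℓ ^ E * w ℓ ^ E) * ∏ p ∈ ltPairs S, d p ^ E =
      (a * b * c) ^ (-2 : ℝ) * (∏ p ∈ ltPairs S, (a * c * d p / (b * (v p.1 * v p.2))) ^ E) *
        (∏ ℓ ∈ S, (a * w ℓ / (b * v ℓ)) ^ E * (c * u ℓ / (b * v ℓ)) ^ E) *
        ∏ ℓ ∈ S, (a * c / (b * v ℓ ^ 2)) ^ 2 := by
  set g : ι → ℝ := fun ℓ => (a * c / b) ^ (E / 2) * v ℓ ^ (-E)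
  have hpair : ∀ p ∈ ltPairs S,
      (a * c * d p / (b * (v p.1 * v p.2))) ^ E = d p ^ E * (g p.1 * g p.2) := by
    intro p hp
    obtain ⟨h₁, h₂, -⟩ := mem_ltPairs.1 hp
    exact rpow_pair_weight_eq ha hb hc (hd p hp) (hv _ h₁) (hv _ h₂) E
  have hpoint : ∀ ℓ ∈ S, g ℓ ^ (#S - 1) *
      ((a * w ℓ / (b * v ℓ)) ^ E * (c * u ℓ / (b * v ℓ)) ^ E) * (a * c / (b * v ℓ ^ 2)) ^ 2 =
        (a * b * c) ^ (-E / 2) * (u ℓ ^ E * v ℓ ^ E * w ℓ ^ E) := by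
    intro ℓ hℓ
    refine rpow_point_weight_eq ha hb hc (hu ℓ hℓ) (hv ℓ hℓ) (hw ℓ hℓ) ?_
    rw [Nat.cast_sub (card_pos.2 ⟨ℓ, hℓ⟩)]
    linear_combination hE
  have habc : (a * b * c) ^ (-2 : ℝ) * ((a * b * c) ^ (-E / 2)) ^ #S = a ^ E * b ^ E * c ^ E := by
    rw [← rpow_natCast, ← rpow_mul (by positivity), ← rpow_add (by positivity),
      mul_rpow (by positivity) hc.le, mul_rpow ha.le hb.le]
    congr 3 <;> linear_combination -hE / 2
  calc _ = (a * b * c) ^ (-2 : ℝ) * (∏ ℓ ∈ S, (a * b * c) ^ (-E / 2) *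
          (u ℓ ^ E * v ℓ ^ E * w ℓ ^ E)) * ∏ p ∈ ltPairs S, d p ^ E := by
        simp only [prod_mul_distrib, prod_const, ← habc]
        ring
    _ = (a * b * c) ^ (-2 : ℝ) * (∏ ℓ ∈ S, g ℓ ^ (#S - 1) *
          ((a * w ℓ / (b * v ℓ)) ^ E * (c * u ℓ / (b * v ℓ)) ^ E) * (a * c / (b * v ℓ ^ 2)) ^ 2) *
          ∏ p ∈ ltPairs S, d p ^ E := by
        rw [prod_congr rfl hpoint]
    _ = _ := by
        rw [prod_congr rfl hpair, prod_mul_distrib (s := ltPairs S), prod_ltPairs_mul]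
        simp only [prod_mul_distrib]
        ring

theorem prod_norm_sub_rpow_eq_crossRatio_form {ι 𝕜 : Type*} [LinearOrder ι] [NormedField 𝕜]
    {x₀ x₁ x₂ : ι} {S : Finset ι} (h₀₁ : x₀ < x₁) (h₁₂ : x₁ < x₂) (hS : ∀ ℓ ∈ S, x₂ < ℓ)
    {z : ι → 𝕜} (hz : Function.Injective z) {E : ℝ} (hE : E * (#S + 2) = -4) :
    let y : ι → 𝕜 := fun ℓ => crossRatio (z x₀) (z x₁) (z x₂) (z ℓ)
    ∏ p ∈ ltPairs (insert x₀ (insert x₁ (insert x₂ S))), ‖z p.1 - z p.2‖ ^ E =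
      ‖(z x₀ - z x₁) * (z x₀ - z x₂) * (z x₁ - z x₂)‖ ^ (-2 : ℝ) *
        (∏ p ∈ ltPairs S, ‖y p.1 - y p.2‖ ^ E) * (∏ ℓ ∈ S, ‖y ℓ‖ ^ E * ‖1 - y ℓ‖ ^ E) *
        ∏ ℓ ∈ S, (‖z x₀ - z x₁‖ * ‖z x₁ - z x₂‖ / (‖z x₀ - z x₂‖ * ‖z ℓ - z x₁‖ ^ 2)) ^ 2 := by
  intro y
  have h₁S : ∀ ℓ ∈ S, x₁ < ℓ := fun ℓ hℓ => h₁₂.trans (hS ℓ hℓ)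
  have hdist : ∀ {i j : ι}, i < j → 0 < ‖z i - z j‖ := fun h =>
    norm_pos_iff.2 (sub_ne_zero.2 (hz.ne h.ne))
  have h₀₂ : z x₀ ≠ z x₂ := hz.ne (h₀₁.trans h₁₂).ne
  have hS₁ : ∀ ℓ ∈ S, z ℓ ≠ z x₁ := fun ℓ hℓ => hz.ne (h₁S ℓ hℓ).ne'
  have hpair : ∀ p ∈ ltPairs S, ‖y p.1 - y p.2‖ ^ E =
      (‖z x₀ - z x₁‖ * ‖z x₁ - z x₂‖ * ‖z p.1 - z p.2‖ /
        (‖z x₀ - z x₂‖ * (‖z x₁ - z p.1‖ * ‖z x₁ - z p.2‖))) ^ E := by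
    intro p hp
    obtain ⟨h₁, h₂, -⟩ := mem_ltPairs.1 hp
    rw [norm_crossRatio_sub_crossRatio h₀₂ (hS₁ _ h₁) (hS₁ _ h₂)]
  have hpoint : ∀ ℓ ∈ S, ‖y ℓ‖ ^ E * ‖1 - y ℓ‖ ^ E =
      (‖z x₀ - z x₁‖ * ‖z x₂ - z ℓ‖ / (‖z x₀ - z x₂‖ * ‖z x₁ - z ℓ‖)) ^ E *
        (‖z x₁ - z x₂‖ * ‖z x₀ - z ℓ‖ / (‖z x₀ - z x₂‖ * ‖z x₁ - z ℓ‖)) ^ E := by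
    intro ℓ hℓ
    rw [norm_crossRatio, norm_one_sub_crossRatio h₀₂ (hS₁ ℓ hℓ)]
  have hrev : ∀ ℓ ∈ S, (‖z x₀ - z x₁‖ * ‖z x₁ - z x₂‖ / (‖z x₀ - z x₂‖ * ‖z ℓ - z x₁‖ ^ 2)) ^ 2 =
      (‖z x₀ - z x₁‖ * ‖z x₁ - z x₂‖ / (‖z x₀ - z x₂‖ * ‖z x₁ - z ℓ‖ ^ 2)) ^ 2 :=
    fun ℓ _ => by rw [norm_sub_rev (z ℓ)]
  rw [prod_ltPairs_insert_three h₀₁ h₁₂ hS, norm_mul, norm_mul, prod_congr rfl hpair,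
    prod_congr rfl hpoint, prod_congr rfl hrev]
  exact prod_rpow_eq_crossRatio_form S hE (hdist h₀₁) (hdist (h₀₁.trans h₁₂)) (hdist h₁₂)
    (fun ℓ hℓ => hdist ((h₀₁.trans h₁₂).trans (hS ℓ hℓ))) (fun ℓ hℓ => hdist (h₁S ℓ hℓ))
    (fun ℓ hℓ => hdist (hS ℓ hℓ)) fun p hp => hdist (mem_ltPairs.1 hp).2.2

/-- **Cross-ratio factorization of the canonical density of ℙ¹.** Let `N ≥ 4`,
`e = 4/(N-1)`, and let `z₁, …, z_N ∈ ℂ` be pairwise distinct. With the cross-ratios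
`y_ℓ = (z₁-z₂)(z_ℓ-z₃)/((z₁-z₃)(z_ℓ-z₂))` for `4 ≤ ℓ ≤ N` (indices `0,1,2` and `ℓ ≥ 3`
in `Fin N`), one has
`∏_{i<j} |z_i-z_j|^{-e} = |(z₁-z₂)(z₁-z₃)(z₂-z₃)|^{-2} · ∏_{4≤i<j} |y_i-y_j|^{-e}
· ∏_{ℓ≥4} |y_ℓ|^{-e} |1-y_ℓ|^{-e} · ∏_{ℓ≥4} (|z₁-z₂||z₂-z₃|/(|z₁-z₃||z_ℓ-z₂|²))²`. -/
theorem vandermonde_cross_ratio_factorization (N : ℕ) (hN : 4 ≤ N) (z : Fin N → ℂ)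
    (hz : Function.Injective z) :
    let z₁ := z ⟨0, by omega⟩
    let z₂ := z ⟨1, by omega⟩
    let z₃ := z ⟨2, by omega⟩
    let y : Fin N → ℂ := fun ℓ => ((z₁ - z₂) * (z ℓ - z₃)) / ((z₁ - z₃) * (z ℓ - z₂))
    (∏ a ∈ Finset.univ.filter (fun a : Fin N × Fin N => a.1 < a.2),
        ‖z a.1 - z a.2‖ ^ (-(4 / ((N : ℝ) - 1)))) =
      ‖(z₁ - z₂) * (z₁ - z₃) * (z₂ - z₃)‖ ^ (-2 : ℝ) *
        (∏ a ∈ Finset.univ.filter (fun a : Fin N × Fin N => 3 ≤ (a.1 : ℕ) ∧ a.1 < a.2),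
          ‖y a.1 - y a.2‖ ^ (-(4 / ((N : ℝ) - 1)))) *
        (∏ ℓ ∈ Finset.univ.filter (fun ℓ : Fin N => 3 ≤ (ℓ : ℕ)),
          ‖y ℓ‖ ^ (-(4 / ((N : ℝ) - 1))) * ‖1 - y ℓ‖ ^ (-(4 / ((N : ℝ) - 1)))) *
        ∏ ℓ ∈ Finset.univ.filter (fun ℓ : Fin N => 3 ≤ (ℓ : ℕ)),
          (‖z₁ - z₂‖ * ‖z₂ - z₃‖ / (‖z₁ - z₃‖ * ‖z ℓ - z₂‖ ^ 2)) ^ 2 := by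
  intro z₁ z₂ z₃ y
  set S := univ.filter fun ℓ : Fin N => 3 ≤ (ℓ : ℕ)
  have huniv : (univ : Finset (Fin N)) =
      insert ⟨0, by omega⟩ (insert ⟨1, by omega⟩ (insert ⟨2, by omega⟩ S)) := by
    ext ℓ
    simp only [S, mem_univ, mem_insert, mem_filter, true_and, true_iff, Fin.ext_iff]
    omega
  have hpairs : univ.filter (fun p : Fin N × Fin N => 3 ≤ (p.1 : ℕ) ∧ p.1 < p.2) = ltPairs S := by
    ext p
    simp only [mem_ltPairs, S, mem_filter, mem_univ, true_and]
    exact ⟨fun h => ⟨h.1, h.1.trans h.2.le, h.2⟩, fun h => ⟨h.1, h.2.2⟩⟩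
  have hE : -(4 / ((N : ℝ) - 1)) * (#S + 2) = -4 := by
    have hcard : #S + 3 = N := by
      have h := congrArg card huniv
      rw [card_univ, Fintype.card_fin, card_insert_of_notMem, card_insert_of_notMem,
        card_insert_of_notMem] at h
      · exact h.symm
      all_goals simp [S, Fin.ext_iff]
    have hN' : (N : ℝ) - 1 = #S + 2 := by
      rw [sub_eq_iff_eq_add]
      exact_mod_cast hcard.symm.trans (by ring)
    rw [hN', neg_mul, div_mul_cancel₀ _ (by exact_mod_cast (#S).succ_ne_zero)]
  rw [← ltPairs_univ, huniv, hpairs]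
  exact prod_norm_sub_rpow_eq_crossRatio_form (Fin.mk_lt_mk.2 zero_lt_one)
    (Fin.mk_lt_mk.2 one_lt_two) (fun ℓ hℓ => Fin.lt_def.2 (mem_filter.1 hℓ).2) hz hE
end

section
/- There exists a constant C > 0 such that for every integer N ≥ 2: | (1/N) Σ_{j=0}^{N−1} log Γ((j+2)/(N+2)) − ∫₀¹ log Γ(t) dt | ≤ C (log N)/N, where Γ denotes the real Gamma function. -/
open scoped BigOperators
open Real MeasureTheory Set

namespace LogGammaRS

noncomputable def lg : ℝ → ℝ := fun t => Real.log (Real.Gamma t)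

lemma lg_one : lg 1 = 0 := by simp [lg, Real.Gamma_one]

lemma lg_two : lg 2 = 0 := by simp [lg, Real.Gamma_two]

lemma lg_nonneg {t : ℝ} (ht : 0 < t) (ht1 : t ≤ 1) : 0 ≤ lg t := by
  rcases eq_or_lt_of_le ht1 with h | h
  · simp [h, lg_one]
  · have hs := Real.convexOn_log_Gamma.slope_mono_adjacent (Set.mem_Ioi.mpr ht)
      (Set.mem_Ioi.mpr (by norm_num : (0:ℝ) < 2)) h (by norm_num : (1:ℝ) < 2)
    have h1 : (0:ℝ) < 1 - t := by linarith
    have he1 : (Real.log ∘ Real.Gamma) 1 = 0 := by simp [Function.comp, Real.Gamma_one]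
    have he2 : (Real.log ∘ Real.Gamma) 2 = 0 := by simp [Function.comp, Real.Gamma_two]
    rw [he1, he2] at hs
    have he3 : (Real.log ∘ Real.Gamma) t = lg t := rfl
    rw [he3] at hs
    by_contra hc
    push_neg at hc
    have hpos : 0 < (0 - lg t) / (1 - t) := div_pos (by linarith) h1
    have hz : (0 - (0:ℝ)) / (2 - 1) = 0 := by norm_num
    rw [hz] at hs
    linarith

lemma lg_anti {s t : ℝ} (hs : 0 < s) (hst : s ≤ t) (ht1 : t ≤ 1) : lg t ≤ lg s := by
  rcases eq_or_lt_of_le hst with h | h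
  · simp [h]
  · have hsl := Real.convexOn_log_Gamma.slope_mono_adjacent (Set.mem_Ioi.mpr hs)
      (Set.mem_Ioi.mpr (by norm_num : (0:ℝ) < 2)) h (by linarith : t < 2)
    have he2 : (Real.log ∘ Real.Gamma) 2 = 0 := by simp [Function.comp, Real.Gamma_two]
    rw [he2] at hsl
    have he3 : (Real.log ∘ Real.Gamma) t = lg t := rfl
    have he4 : (Real.log ∘ Real.Gamma) s = lg s := rfl
    rw [he3, he4] at hsl
    have hts : (0:ℝ) < t - s := by linarith
    have h2t : (0:ℝ) < 2 - t := by linarith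
    have hrhs : (0 - lg t) / (2 - t) ≤ 0 :=
      div_nonpos_iff.mpr (Or.inr ⟨by linarith [lg_nonneg (hs.trans h) ht1], h2t.le⟩)
    by_contra hc
    push_neg at hc
    have : 0 < (lg t - lg s) / (t - s) := div_pos (by linarith) hts
    linarith

lemma lg_le_neg_log {t : ℝ} (ht : 0 < t) (ht1 : t ≤ 1) : lg t ≤ -Real.log t := by
  have hseg : t + 1 ∈ segment ℝ (1:ℝ) 2 := by
    rw [segment_eq_Icc (by norm_num : (1:ℝ) ≤ 2)]
    constructor <;> linarith
  have hle := Real.convexOn_log_Gamma.le_on_segment (Set.mem_Ioi.mpr one_pos)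
    (Set.mem_Ioi.mpr (by norm_num : (0:ℝ) < 2)) hseg
  have he1 : (Real.log ∘ Real.Gamma) 1 = 0 := by simp [Function.comp, Real.Gamma_one]
  have he2 : (Real.log ∘ Real.Gamma) 2 = 0 := by simp [Function.comp, Real.Gamma_two]
  rw [he1, he2, max_self] at hle
  have h1 : Real.Gamma (t + 1) = t * Real.Gamma t := Real.Gamma_add_one ht.ne'
  have h2 : (Real.log ∘ Real.Gamma) (t + 1) = Real.log t + lg t := by
    simp only [Function.comp_apply, h1, lg]
    rw [Real.log_mul ht.ne' (Real.Gamma_pos_of_pos ht).ne']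
  rw [h2] at hle
  linarith

lemma lg_nonneg' {t : ℝ} (ht : 0 ≤ t) (ht1 : t ≤ 1) : 0 ≤ lg t := by
  rcases eq_or_lt_of_le ht with h | h
  · simp [← h, lg, Real.Gamma_zero]
  · exact lg_nonneg h ht1

lemma lg_le_neg_log' {t : ℝ} (ht : 0 ≤ t) (ht1 : t ≤ 1) : lg t ≤ -Real.log t := by
  rcases eq_or_lt_of_le ht with h | h
  · simp [← h, lg, Real.Gamma_zero]
  · exact lg_le_neg_log h ht1

lemma lg_continuousAt {x : ℝ} (hx : 0 < x) : ContinuousAt lg x := by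
  have hd : DifferentiableAt ℝ Real.Gamma x :=
    Real.differentiableAt_Gamma fun m =>
      ne_of_gt (lt_of_le_of_lt (neg_nonpos.mpr (Nat.cast_nonneg m)) hx)
  exact hd.continuousAt.log (Real.Gamma_pos_of_pos hx).ne'

lemma intInt_neglog {a : ℝ} (ha : 0 ≤ a) (ha1 : a ≤ 1) :
    IntervalIntegrable (fun t => -Real.log t) volume 0 a := by
  have hr : IntervalIntegrable (fun x : ℝ => 2 * x ^ (-(1:ℝ)/2)) volume 0 a :=
    (intervalIntegral.intervalIntegrable_rpow' (by norm_num)).const_mul 2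
  refine hr.mono_fun' (Real.measurable_log.neg).aestronglyMeasurable ?_
  filter_upwards [ae_restrict_mem measurableSet_uIoc] with x hx
  rw [Set.uIoc_of_le ha] at hx
  obtain ⟨hx0, hxa⟩ := hx
  have hx1 : x ≤ 1 := hxa.trans ha1
  have hlognp : Real.log x ≤ 0 := Real.log_nonpos hx0.le hx1
  have hp : (0:ℝ) < x ^ (-(1:ℝ)/2) := Real.rpow_pos_of_pos hx0 _
  have hlog : Real.log (x ^ (-(1:ℝ)/2)) = (-(1:ℝ)/2) * Real.log x := Real.log_rpow hx0 _
  have hsub := Real.log_le_sub_one_of_pos hp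
  rw [hlog] at hsub
  have : ‖-Real.log x‖ = -Real.log x := by
    rw [Real.norm_eq_abs, abs_of_nonneg (by linarith)]
  rw [this]
  linarith

lemma integral_neglog {a : ℝ} (ha : 0 < a) (ha1 : a ≤ 1) :
    ∫ t in (0:ℝ)..a, -Real.log t = a - a * Real.log a := by
  have h := intervalIntegral.integral_eq_sub_of_hasDeriv_right_of_le ha.le
    (f := fun t => t - t * Real.log t) (f' := fun t => -Real.log t)
    ((continuous_id.sub Real.continuous_mul_log).continuousOn)
    (fun t ht => by
      have h1 : HasDerivAt (fun t : ℝ => t - t * Real.log t) (1 - (Real.log t + 1)) t :=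
        (hasDerivAt_id t).sub (Real.hasDerivAt_mul_log ht.1.ne')
      have h2 : HasDerivAt (fun t : ℝ => t - t * Real.log t) (-Real.log t) t := by
        convert h1 using 1; ring
      exact h2.hasDerivWithinAt)
    (intInt_neglog ha.le ha1)
  rw [h]
  simp

lemma lg_integrableOn : IntegrableOn lg (Set.Ioc (0:ℝ) 1) volume := by
  have hm : AEStronglyMeasurable lg (volume.restrict (Set.Ioc (0:ℝ) 1)) :=
    (continuousOn_of_forall_continuousAt fun x hx =>
      (lg_continuousAt hx.1)).aestronglyMeasurable measurableSet_Ioc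
  have hb : IntegrableOn (fun t => -Real.log t) (Set.Ioc (0:ℝ) 1) volume := by
    have h := intInt_neglog zero_le_one le_rfl
    exact h.1
  refine hb.mono' hm ?_
  filter_upwards [ae_restrict_mem measurableSet_Ioc] with x hx
  rw [Real.norm_eq_abs, abs_of_nonneg (lg_nonneg hx.1 hx.2)]
  exact lg_le_neg_log hx.1 hx.2

lemma lg_intInt {a b : ℝ} (ha : 0 ≤ a) (hab : a ≤ b) (hb1 : b ≤ 1) :
    IntervalIntegrable lg volume a b := by
  rw [intervalIntegrable_iff_integrableOn_Ioc_of_le hab]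
  exact lg_integrableOn.mono_set (Set.Ioc_subset_Ioc ha hb1)

end LogGammaRS

/-- **Riemann-sum estimate for `log Γ`.** There is a constant `C > 0` such that for every
integer `N ≥ 2`,
`| (1/N) Σ_{j=0}^{N-1} log Γ((j+2)/(N+2)) − ∫₀¹ log Γ(t) dt | ≤ C (log N)/N`. -/
theorem logGamma_riemann_sum_estimate :
    ∃ C : ℝ, 0 < C ∧ ∀ N : ℕ, 2 ≤ N →
      |(1 / (N : ℝ)) *
            ∑ j ∈ Finset.range N, Real.log (Real.Gamma (((j : ℝ) + 2) / ((N : ℝ) + 2))) -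
          ∫ t in (0 : ℝ)..1, Real.log (Real.Gamma t)| ≤
        C * Real.log N / N := by
  refine ⟨8, by norm_num, ?_⟩
  intro N hN
  have hM2 : (2:ℝ) ≤ (N:ℝ) := by exact_mod_cast hN
  set M : ℝ := (N : ℝ) with hMdef
  have hMpos : (0:ℝ) < M := by linarith
  have hM2pos : (0:ℝ) < M + 2 := by linarith
  set p : ℕ → ℝ := fun k => ((k:ℝ) + 1) / (M + 2) with hp
  have hppos : ∀ k : ℕ, 0 < p k := fun k => div_pos (by positivity) hM2pos
  have hpmono : ∀ k l : ℕ, k ≤ l → p k ≤ p l := by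
    intro k l hkl
    have hc : (k:ℝ) ≤ (l:ℝ) := Nat.cast_le.mpr hkl
    exact (div_le_div_iff_of_pos_right hM2pos).mpr (by linarith)
  have hple : ∀ k : ℕ, (k:ℝ) ≤ M + 1 → p k ≤ 1 := fun k hk =>
    (div_le_one hM2pos).mpr (by linarith)
  have hstep : ∀ k : ℕ, p (k+1) - p k = 1/(M+2) := by
    intro k; simp only [hp]; push_cast; field_simp; ring
  have hpN1 : p (N+1) = 1 := by
    simp only [hp]
    rw [div_eq_one_iff_eq hM2pos.ne']
    push_cast
    ring
  set T := ∑ j ∈ Finset.range N, LogGammaRS.lg (p (j+1)) with hT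
  have hsum_eq : ∑ j ∈ Finset.range N, Real.log (Real.Gamma (((j:ℝ)+2)/(M+2))) = T := by
    refine Finset.sum_congr rfl fun j _ => ?_
    have harg : ((j:ℝ)+2)/(M+2) = p (j+1) := by simp only [hp]; push_cast; ring_nf
    rw [harg]; rfl
  have hint : ∀ k : ℕ, (k:ℝ) + 1 ≤ M + 1 → IntervalIntegrable LogGammaRS.lg volume (p k) (p (k+1)) :=
    fun k hk => LogGammaRS.lg_intInt (hppos k).le (hpmono k (k+1) (Nat.le_succ k))
      (hple (k+1) (by push_cast; linarith))
  -- Upper bound for the Riemann sum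
  have hup : (1/(M+2)) * T ≤ ∫ t in (p 0)..(p N), LogGammaRS.lg t := by
    have hsum : ∑ j ∈ Finset.range N, ∫ t in (p j)..(p (j+1)), LogGammaRS.lg t
        = ∫ t in (p 0)..(p N), LogGammaRS.lg t := by
      refine intervalIntegral.sum_integral_adjacent_intervals fun k hk => ?_
      have hkM : (k:ℝ) < M := by rw [hMdef]; exact_mod_cast hk
      exact hint k (by linarith)
    rw [← hsum, hT, Finset.mul_sum]
    refine Finset.sum_le_sum fun j hj => ?_
    have hjN : (j:ℝ) < M := by rw [hMdef]; exact_mod_cast Finset.mem_range.mp hj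
    have hj1le : p (j+1) ≤ 1 := hple (j+1) (by push_cast; linarith)
    have hIj : IntervalIntegrable LogGammaRS.lg volume (p j) (p (j+1)) := hint j (by linarith)
    have hconst : ∫ _t in (p j)..(p (j+1)), LogGammaRS.lg (p (j+1)) = (1/(M+2)) * LogGammaRS.lg (p (j+1)) := by
      rw [intervalIntegral.integral_const, smul_eq_mul, hstep j]
    rw [← hconst]
    refine intervalIntegral.integral_mono_on (hpmono j (j+1) (Nat.le_succ j))
      intervalIntegrable_const hIj fun x hx => ?_
    exact LogGammaRS.lg_anti (lt_of_lt_of_le (hppos j) hx.1) hx.2 hj1le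
  -- Lower bound for the Riemann sum
  have hlow : ∫ t in (p 1)..(p (N+1)), LogGammaRS.lg t ≤ (1/(M+2)) * T := by
    have hsum : ∑ j ∈ Finset.range N, ∫ t in (p (j+1))..(p (j+1+1)), LogGammaRS.lg t
        = ∫ t in (p (0+1))..(p (N+1)), LogGammaRS.lg t := by
      refine intervalIntegral.sum_integral_adjacent_intervals (a := fun k => p (k+1)) fun k hk => ?_
      have hkM : (k:ℝ) + 1 ≤ M := by rw [hMdef]; exact_mod_cast hk
      exact hint (k+1) (by push_cast; linarith)
    have hsum' : ∑ j ∈ Finset.range N, ∫ t in (p (j+1))..(p (j+1+1)), LogGammaRS.lg t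
        = ∫ t in (p 1)..(p (N+1)), LogGammaRS.lg t := by rw [hsum]
    rw [← hsum', hT, Finset.mul_sum]
    refine Finset.sum_le_sum fun j hj => ?_
    have hjN : (j:ℝ) + 1 ≤ M := by rw [hMdef]; exact_mod_cast Finset.mem_range.mp hj
    have hj2le : p (j+1+1) ≤ 1 := hple (j+1+1) (by push_cast; linarith)
    have hIj : IntervalIntegrable LogGammaRS.lg volume (p (j+1)) (p (j+1+1)) :=
      hint (j+1) (by push_cast; linarith)
    have hconst : ∫ _t in (p (j+1))..(p (j+1+1)), LogGammaRS.lg (p (j+1))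
        = (1/(M+2)) * LogGammaRS.lg (p (j+1)) := by
      rw [intervalIntegral.integral_const, smul_eq_mul, hstep (j+1)]
    rw [← hconst]
    refine intervalIntegral.integral_mono_on (hpmono (j+1) (j+1+1) (Nat.le_succ _))
      hIj intervalIntegrable_const fun x hx => ?_
    exact LogGammaRS.lg_anti (hppos (j+1)) hx.1 (le_trans hx.2 hj2le)
  set I := ∫ t in (0:ℝ)..1, LogGammaRS.lg t with hI
  have hp0le : p 0 ≤ 1 := hple 0 (by push_cast; linarith)
  have hp1le : p 1 ≤ 1 := hple 1 (by push_cast; linarith)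
  have hpNle : p N ≤ 1 := hple N (by rw [← hMdef]; linarith)
  have hE0 : 0 ≤ ∫ t in (0:ℝ)..(p 0), LogGammaRS.lg t :=
    intervalIntegral.integral_nonneg (hppos 0).le fun u hu =>
      LogGammaRS.lg_nonneg' hu.1 (hu.2.trans hp0le)
  have hE1 : 0 ≤ ∫ t in (0:ℝ)..(p 1), LogGammaRS.lg t :=
    intervalIntegral.integral_nonneg (hppos 1).le fun u hu =>
      LogGammaRS.lg_nonneg' hu.1 (hu.2.trans hp1le)
  have htail : 0 ≤ ∫ t in (p N)..(1:ℝ), LogGammaRS.lg t :=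
    intervalIntegral.integral_nonneg hpNle fun u hu =>
      LogGammaRS.lg_nonneg' ((hppos N).le.trans hu.1) hu.2
  have hsplit0 : (∫ t in (0:ℝ)..(p 0), LogGammaRS.lg t) + ∫ t in (p 0)..(1:ℝ), LogGammaRS.lg t = I :=
    intervalIntegral.integral_add_adjacent_intervals
      (LogGammaRS.lg_intInt le_rfl (hppos 0).le hp0le)
      (LogGammaRS.lg_intInt (hppos 0).le hp0le le_rfl)
  have hsplit1 : (∫ t in (0:ℝ)..(p 1), LogGammaRS.lg t) + ∫ t in (p 1)..(1:ℝ), LogGammaRS.lg t = I :=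
    intervalIntegral.integral_add_adjacent_intervals
      (LogGammaRS.lg_intInt le_rfl (hppos 1).le hp1le)
      (LogGammaRS.lg_intInt (hppos 1).le hp1le le_rfl)
  have hsplitN : (∫ t in (p 0)..(p N), LogGammaRS.lg t) + ∫ t in (p N)..(1:ℝ), LogGammaRS.lg t
      = ∫ t in (p 0)..(1:ℝ), LogGammaRS.lg t :=
    intervalIntegral.integral_add_adjacent_intervals
      (LogGammaRS.lg_intInt (hppos 0).le (hpmono 0 N (Nat.zero_le N)) hpNle)
      (LogGammaRS.lg_intInt (hppos N).le hpNle le_rfl)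
  have key1 : (1/(M+2)) * T ≤ I := by linarith
  have hdelta : ∫ t in (0:ℝ)..(p 1), LogGammaRS.lg t ≤ p 1 - p 1 * Real.log (p 1) := by
    calc ∫ t in (0:ℝ)..(p 1), LogGammaRS.lg t
        ≤ ∫ t in (0:ℝ)..(p 1), -Real.log t :=
          intervalIntegral.integral_mono_on (hppos 1).le
            (LogGammaRS.lg_intInt le_rfl (hppos 1).le hp1le)
            (LogGammaRS.intInt_neglog (hppos 1).le hp1le)
            fun x hx => LogGammaRS.lg_le_neg_log' hx.1 (hx.2.trans hp1le)
      _ = p 1 - p 1 * Real.log (p 1) := LogGammaRS.integral_neglog (hppos 1) hp1le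
  have hlow' : ∫ t in (p 1)..(1:ℝ), LogGammaRS.lg t ≤ (1/(M+2)) * T := by
    have heq : ∫ t in (p 1)..(1:ℝ), LogGammaRS.lg t = ∫ t in (p 1)..(p (N+1)), LogGammaRS.lg t := by
      rw [hpN1]
    rw [heq]; exact hlow
  have key2 : I - (p 1 - p 1 * Real.log (p 1)) ≤ (1/(M+2)) * T := by linarith
  have hIle : I ≤ 1 := by
    calc I ≤ ∫ t in (0:ℝ)..1, -Real.log t :=
          intervalIntegral.integral_mono_on zero_le_one
            (LogGammaRS.lg_intInt le_rfl zero_le_one le_rfl)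
            (LogGammaRS.intInt_neglog zero_le_one le_rfl)
            fun x hx => LogGammaRS.lg_le_neg_log' hx.1 hx.2
      _ = 1 := by rw [LogGammaRS.integral_neglog one_pos le_rfl]; simp
  set δ : ℝ := p 1 - p 1 * Real.log (p 1) with hdeltadef
  have hlogp1np : Real.log (p 1) ≤ 0 := Real.log_nonpos (hppos 1).le hp1le
  have hdnn : 0 ≤ δ := by nlinarith [(hppos 1).le]
  have hp1val : p 1 = 2/(M+2) := by simp only [hp]; norm_num
  have hlogp1 : -Real.log (p 1) = Real.log ((M+2)/2) := by
    rw [hp1val, ← Real.log_inv, inv_div]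
  have hlogle : Real.log ((M+2)/2) ≤ Real.log M :=
    Real.log_le_log (by positivity) (by linarith)
  have hlogM : (2:ℝ)/3 ≤ Real.log M := by
    have h2 : (0.6931471803:ℝ) < Real.log 2 := Real.log_two_gt_d9
    have h3 : Real.log 2 ≤ Real.log M := Real.log_le_log (by norm_num) hM2
    linarith
  have hdle : δ ≤ (2/M) * (1 + Real.log M) := by
    have h1 : p 1 ≤ 2/M := by
      rw [hp1val]
      exact div_le_div_of_nonneg_left (by norm_num) hMpos (by linarith)
    have h2 : 1 - Real.log (p 1) ≤ 1 + Real.log M := by linarith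
    have h3 : 0 ≤ 1 - Real.log (p 1) := by linarith
    calc δ = p 1 * (1 - Real.log (p 1)) := by rw [hdeltadef]; ring
      _ ≤ (2/M) * (1 + Real.log M) := mul_le_mul h1 h2 h3 (by positivity)
  have hTnn : 0 ≤ T := by
    rw [hT]
    refine Finset.sum_nonneg fun j hj => ?_
    have hjN : (j:ℝ) < M := by rw [hMdef]; exact_mod_cast Finset.mem_range.mp hj
    exact LogGammaRS.lg_nonneg (hppos (j+1)) (hple (j+1) (by push_cast; linarith))
  have hmain : |1/M * T - I| ≤ δ + 2/M := by
    have hsplitT : 1/M * T - I = (1/(M+2) * T - I) + (2/(M*(M+2))) * T := by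
      have : 1/M * T = 1/(M+2) * T + (2/(M*(M+2))) * T := by
        field_simp
      linarith
    have hTb : (1/(M+2)) * T ≤ 1 := key1.trans hIle
    have h2nd : (2/(M*(M+2))) * T ≤ 2/M := by
      have heq : (2/(M*(M+2))) * T = (2/M) * ((1/(M+2)) * T) := by field_simp
      rw [heq]
      calc (2/M) * ((1/(M+2)) * T) ≤ (2/M) * 1 :=
            mul_le_mul_of_nonneg_left hTb (by positivity)
        _ = 2/M := mul_one _
    have h2nd' : 0 ≤ (2/(M*(M+2))) * T := by positivity
    rw [abs_le]
    constructor
    · rw [hsplitT]; linarith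
    · rw [hsplitT]; linarith
  have hgoal : (∫ t in (0:ℝ)..1, Real.log (Real.Gamma t)) = I := rfl
  rw [hgoal, hsum_eq]
  refine hmain.trans ?_
  have heq2 : (2/M) * (1 + Real.log M) + 2/M = (4 + 2*Real.log M)/M := by
    field_simp; ring
  have hstep2 : δ + 2/M ≤ (4 + 2*Real.log M)/M := by linarith [heq2 ▸ add_le_add_left hdle (2/M)]
  have hfin : (4 + 2*Real.log M)/M ≤ 8 * Real.log M / M :=
    (div_le_div_iff_of_pos_right hMpos).mpr (by linarith)
  linarith
end

section
/- Let σ_FS be the Borel probability measure on ℂ with density z ↦ 1/(π (1 + |z|²)²) with respect to Lebesgue measure, and for t ≥ 0 let T_t : ℂ → ℂ be the map T_t(z) = e^{−t/2} z. Then for all t ≥ 0: t − 2 ≤ D( (T_t)_* σ_FS ‖ σ_FS ) ≤ t. In particular D((T_t)_*σ_FS ‖ σ_FS) = t + O(1) as t → ∞. -/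
open MeasureTheory
open scoped ENNReal Classical

/-- The normalized Fubini–Study volume: the Borel probability measure on `ℂ` with density
`z ↦ 1/(π (1 + |z|²)²)` with respect to Lebesgue measure. -/
noncomputable def sigmaFS : Measure ℂ :=
  volume.withDensity fun z => ENNReal.ofReal (1 / (Real.pi * (1 + ‖z‖ ^ 2) ^ 2))

/-! Scaling by `c = e^{-t/2}` pushes `σ_FS` forward to `ρ_c σ_FS` with
`ρ_c(z) = c²(1 + |z|²)² / (c² + |z|²)²`, and
`log ρ_c(c z) = t + 2 log (1 + c²|z|²) - 2 log (1 + |z|²)`. Hence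
`D((T_t)_* σ_FS ‖ σ_FS) = t - 2 + 2 ∫ log (1 + c²|z|²) dσ_FS`, and for `c ≤ 1` this last integral
lies between `0` and `∫ log (1 + |z|²) dσ_FS = 1`, a radial integral with an explicit primitive. -/

open Set Filter Real Topology

theorem integrable_fun_norm_complex_of_hasDerivAt {f F : ℝ → ℝ} {L : ℝ}
    (hF : ∀ r ∈ Ici (0 : ℝ), HasDerivAt F (r * f r) r) (hf : ∀ r ∈ Ioi (0 : ℝ), 0 ≤ f r)
    (hL : Tendsto F atTop (𝓝 L)) :
    Integrable fun z : ℂ => f ‖z‖ := by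
  rw [integrable_fun_norm_addHaar volume]
  simpa [Complex.finrank_real_complex] using
    integrableOn_Ioi_deriv_of_nonneg' hF (fun r hr => mul_nonneg (le_of_lt hr) (hf r hr)) hL

theorem integral_fun_norm_complex_of_hasDerivAt {f F : ℝ → ℝ} {L : ℝ}
    (hF : ∀ r ∈ Ici (0 : ℝ), HasDerivAt F (r * f r) r) (hf : ∀ r ∈ Ioi (0 : ℝ), 0 ≤ f r)
    (hL : Tendsto F atTop (𝓝 L)) :
    ∫ z : ℂ, f ‖z‖ = 2 * π * (L - F 0) := by
  have := integral_Ioi_of_hasDerivAt_of_nonneg' hF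
    (fun r hr => mul_nonneg (le_of_lt hr) (hf r hr)) hL
  rw [integral_fun_norm_addHaar volume]
  simp [Complex.finrank_real_complex, Measure.real, Complex.volume_ball, this]
  ring

theorem MeasurableEquiv.map_withDensity {α β : Type*} [MeasurableSpace α] [MeasurableSpace β]
    (e : α ≃ᵐ β) (μ : Measure α) (g : α → ℝ≥0∞) :
    (μ.withDensity g).map e = (μ.map e).withDensity (g ∘ e.symm) := by
  ext s hs
  rw [Measure.map_apply e.measurable hs, withDensity_apply _ (e.measurable hs),
    withDensity_apply _ hs, e.restrict_map, lintegral_map_equiv]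
  simp

theorem relEnt_withDensity_ofReal {α : Type*} [MeasurableSpace α] {ν : Measure α} [SigmaFinite ν]
    {ρ : α → ℝ} (hρ : Measurable ρ)
    (hint : Integrable (fun x => log (ρ x)) (ν.withDensity fun x => ENNReal.ofReal (ρ x))) :
    relEnt (ν.withDensity fun x => ENNReal.ofReal (ρ x)) ν =
      ENNReal.ofReal (∫ x, log (ρ x) ∂ν.withDensity fun x => ENNReal.ofReal (ρ x)) := by
  have hlog : (fun x => log ((ν.withDensity fun x => ENNReal.ofReal (ρ x)).rnDeriv ν x).toReal)
      =ᵐ[ν.withDensity fun x => ENNReal.ofReal (ρ x)] fun x => log (ρ x) := by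
    have hrn := (withDensity_absolutelyContinuous ν fun x => ENNReal.ofReal (ρ x)).ae_eq
      (Measure.rnDeriv_withDensity ν hρ.ennreal_ofReal)
    have hpos : ∀ᵐ x ∂ν.withDensity fun x => ENNReal.ofReal (ρ x), 0 < ρ x :=
      (ae_withDensity_iff hρ.ennreal_ofReal).2 (ae_of_all _ fun x hx =>
        ENNReal.ofReal_pos.1 (pos_iff_ne_zero.2 hx))
    filter_upwards [hrn, hpos] with x hx hx0
    rw [hx, ENNReal.toReal_ofReal hx0.le]
  rw [relEnt, if_pos ⟨withDensity_absolutelyContinuous _ _, hint.congr hlog.symm⟩,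
    integral_congr_ae hlog]

noncomputable def fsRadialDensity (r : ℝ) : ℝ := 1 / (π * (1 + r ^ 2) ^ 2)

theorem fsRadialDensity_pos (r : ℝ) : 0 < fsRadialDensity r := by
  unfold fsRadialDensity; positivity

@[fun_prop]
theorem continuous_fsRadialDensity : Continuous fsRadialDensity := by
  unfold fsRadialDensity
  exact continuous_const.div (by fun_prop) fun r => by positivity

theorem hasDerivAt_neg_inv_two_pi_one_add_sq (r : ℝ) :
    HasDerivAt (fun x => -1 / (2 * π * (1 + x ^ 2))) (r * fsRadialDensity r) r := by
  have hu := (hasDerivAt_pow 2 r).const_add 1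
  refine ((hasDerivAt_const r (-1 : ℝ)).div (hu.const_mul (2 * π)) (by positivity)).congr_deriv ?_
  simp only [fsRadialDensity]; field_simp; ring

theorem hasDerivAt_neg_log_add_one_div_two_pi_one_add_sq (r : ℝ) :
    HasDerivAt (fun x => -(log (1 + x ^ 2) + 1) / (2 * π * (1 + x ^ 2)))
      (r * (fsRadialDensity r * log (1 + r ^ 2))) r := by
  have hu := (hasDerivAt_pow 2 r).const_add 1
  have hu0 : 1 + r ^ 2 ≠ 0 := by positivity
  refine (((hu.log hu0).add_const 1).neg.div (hu.const_mul (2 * π)) (by positivity)).congr_deriv ?_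
  simp only [fsRadialDensity, Pi.neg_apply]; field_simp; ring

theorem tendsto_one_add_sq_atTop : Tendsto (fun x : ℝ => 1 + x ^ 2) atTop atTop :=
  tendsto_atTop_add_const_left _ 1 (tendsto_pow_atTop two_ne_zero)

theorem tendsto_neg_inv_two_pi_one_add_sq :
    Tendsto (fun x => -1 / (2 * π * (1 + x ^ 2))) atTop (𝓝 0) :=
  tendsto_const_nhds.div_atTop (tendsto_one_add_sq_atTop.const_mul_atTop (by positivity))

theorem integrable_fsRadialDensity : Integrable fun z : ℂ => fsRadialDensity ‖z‖ :=
  integrable_fun_norm_complex_of_hasDerivAt (fun r _ => hasDerivAt_neg_inv_two_pi_one_add_sq r)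
    (fun r _ => (fsRadialDensity_pos r).le) tendsto_neg_inv_two_pi_one_add_sq

theorem integral_fsRadialDensity : ∫ z : ℂ, fsRadialDensity ‖z‖ = 1 := by
  rw [integral_fun_norm_complex_of_hasDerivAt (fun r _ => hasDerivAt_neg_inv_two_pi_one_add_sq r)
    (fun r _ => (fsRadialDensity_pos r).le) tendsto_neg_inv_two_pi_one_add_sq]
  field_simp; norm_num

theorem tendsto_neg_log_add_one_div_two_pi_one_add_sq :
    Tendsto (fun x => -(log (1 + x ^ 2) + 1) / (2 * π * (1 + x ^ 2))) atTop (𝓝 0) := by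
  have hlog : Tendsto (fun u : ℝ => log u / u) atTop (𝓝 0) := by
    simpa using Real.tendsto_pow_log_div_mul_add_atTop 1 0 1 one_ne_zero
  have h := ((hlog.add (tendsto_inv_atTop_zero)).comp tendsto_one_add_sq_atTop).const_mul
    (-(2 * π)⁻¹)
  simp only [add_zero, mul_zero] at h
  refine h.congr fun x => ?_
  have : 1 + x ^ 2 ≠ 0 := by positivity
  simp only [Function.comp_apply]; field_simp

theorem integrable_fsRadialDensity_mul_log :
    Integrable fun z : ℂ => fsRadialDensity ‖z‖ * log (1 + ‖z‖ ^ 2) :=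
  integrable_fun_norm_complex_of_hasDerivAt
    (f := fun r => fsRadialDensity r * log (1 + r ^ 2))
    (fun r _ => hasDerivAt_neg_log_add_one_div_two_pi_one_add_sq r)
    (fun r _ => mul_nonneg (fsRadialDensity_pos r).le (log_nonneg (by nlinarith)))
    tendsto_neg_log_add_one_div_two_pi_one_add_sq

theorem integral_fsRadialDensity_mul_log :
    ∫ z : ℂ, fsRadialDensity ‖z‖ * log (1 + ‖z‖ ^ 2) = 1 := by
  rw [integral_fun_norm_complex_of_hasDerivAt
    (f := fun r => fsRadialDensity r * log (1 + r ^ 2))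
    (fun r _ => hasDerivAt_neg_log_add_one_div_two_pi_one_add_sq r)
    (fun r _ => mul_nonneg (fsRadialDensity_pos r).le (log_nonneg (by nlinarith)))
    tendsto_neg_log_add_one_div_two_pi_one_add_sq]
  field_simp; simp

theorem sigmaFS_eq_withDensity :
    sigmaFS = volume.withDensity fun z => ENNReal.ofReal (fsRadialDensity ‖z‖) := rfl

instance : IsProbabilityMeasure sigmaFS := by
  constructor
  rw [sigmaFS_eq_withDensity, withDensity_apply _ MeasurableSet.univ, Measure.restrict_univ,
    ← ofReal_integral_eq_lintegral_ofReal integrable_fsRadialDensity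
      (ae_of_all _ fun z => (fsRadialDensity_pos _).le),
    integral_fsRadialDensity, ENNReal.ofReal_one]

theorem integrable_sigmaFS_iff {g : ℂ → ℝ} :
    Integrable g sigmaFS ↔ Integrable fun z => fsRadialDensity ‖z‖ * g z := by
  rw [sigmaFS_eq_withDensity, integrable_withDensity_iff_integrable_smul' (by fun_prop)
    (ae_of_all _ fun _ => ENNReal.ofReal_lt_top)]
  simp [ENNReal.toReal_ofReal (fsRadialDensity_pos _).le]

theorem integral_sigmaFS (g : ℂ → ℝ) :
    ∫ z, g z ∂sigmaFS = ∫ z, fsRadialDensity ‖z‖ * g z := by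
  rw [sigmaFS_eq_withDensity, integral_withDensity_eq_integral_toReal_smul (by fun_prop)
    (ae_of_all _ fun _ => ENNReal.ofReal_lt_top)]
  simp [ENNReal.toReal_ofReal (fsRadialDensity_pos _).le]

noncomputable def fsScalingDensity (c : ℝ) (z : ℂ) : ℝ :=
  c ^ 2 * (1 + ‖z‖ ^ 2) ^ 2 / (c ^ 2 + ‖z‖ ^ 2) ^ 2

@[fun_prop]
theorem measurable_fsScalingDensity (c : ℝ) : Measurable (fsScalingDensity c) := by
  unfold fsScalingDensity; fun_prop

theorem map_smul_sigmaFS {c : ℝ} (hc : c ≠ 0) :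
    sigmaFS.map (fun z : ℂ => c • z) =
      sigmaFS.withDensity fun z => ENNReal.ofReal (fsScalingDensity c z) := by
  rw [← MeasurableEquiv.coe_smul₀ hc, sigmaFS_eq_withDensity, MeasurableEquiv.map_withDensity,
    MeasurableEquiv.coe_smul₀, Measure.map_addHaar_smul volume hc, withDensity_smul_measure,
    ← withDensity_smul _ (by fun_prop), ← withDensity_mul _ (by fun_prop) (by fun_prop)]
  congr 1
  funext w
  have hw : ‖c⁻¹ • w‖ = ‖w‖ / |c| := by
    rw [norm_smul, norm_inv, Real.norm_eq_abs, inv_mul_eq_div]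
  simp only [Pi.smul_apply, Pi.mul_apply, Function.comp_apply, MeasurableEquiv.symm_smul₀,
    MeasurableEquiv.coe_smul₀, smul_eq_mul, Complex.finrank_real_complex, hw, fsRadialDensity,
    fsScalingDensity]
  rw [← ENNReal.ofReal_mul (by positivity), ← ENNReal.ofReal_mul (by positivity)]
  congr 1
  rw [abs_inv, abs_pow, div_pow, sq_abs]
  have : c ^ 2 + ‖w‖ ^ 2 ≠ 0 := by positivity
  field_simp

theorem log_fsScalingDensity_smul {c : ℝ} (hc : c ≠ 0) (z : ℂ) :
    log (fsScalingDensity c (c • z)) =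
      -2 * log c + 2 * log (1 + c ^ 2 * ‖z‖ ^ 2) - 2 * log (1 + ‖z‖ ^ 2) := by
  have hz : fsScalingDensity c (c • z) =
      (1 + c ^ 2 * ‖z‖ ^ 2) ^ 2 / (c ^ 2 * (1 + ‖z‖ ^ 2) ^ 2) := by
    rw [fsScalingDensity, norm_smul, Real.norm_eq_abs, mul_pow, sq_abs]
    have : 1 + ‖z‖ ^ 2 ≠ 0 := by positivity
    field_simp
  rw [hz, log_div (by positivity) (by positivity), log_mul (by positivity) (by positivity)]
  simp only [log_pow]
  push_cast
  ring

theorem integrable_log_one_add_sq_sigmaFS :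
    Integrable (fun z : ℂ => log (1 + ‖z‖ ^ 2)) sigmaFS :=
  integrable_sigmaFS_iff.2 integrable_fsRadialDensity_mul_log

theorem integral_log_one_add_sq_sigmaFS : ∫ z, log (1 + ‖z‖ ^ 2) ∂sigmaFS = 1 := by
  rw [integral_sigmaFS, integral_fsRadialDensity_mul_log]

theorem integrable_log_one_add_mul_sq_sigmaFS {a : ℝ} (ha : 0 ≤ a) :
    Integrable (fun z : ℂ => log (1 + a * ‖z‖ ^ 2)) sigmaFS := by
  refine ((integrable_const (log (1 + a))).add integrable_log_one_add_sq_sigmaFS).mono'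
    (measurable_log.comp (by fun_prop)).aestronglyMeasurable (ae_of_all _ fun z => ?_)
  have hle : 1 + a * ‖z‖ ^ 2 ≤ (1 + a) * (1 + ‖z‖ ^ 2) := by nlinarith [sq_nonneg ‖z‖]
  rw [Pi.add_apply, Real.norm_of_nonneg (log_nonneg (by nlinarith [sq_nonneg ‖z‖])),
    ← log_mul (by positivity) (by positivity)]
  exact log_le_log (by positivity) hle

theorem integral_log_one_add_mul_sq_sigmaFS_mem_Icc {a : ℝ} (ha₀ : 0 ≤ a) (ha₁ : a ≤ 1) :
    ∫ z, log (1 + a * ‖z‖ ^ 2) ∂sigmaFS ∈ Icc 0 1 := by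
  refine ⟨integral_nonneg fun z => log_nonneg (by nlinarith [sq_nonneg ‖z‖]), ?_⟩
  refine (integral_mono (integrable_log_one_add_mul_sq_sigmaFS ha₀)
    integrable_log_one_add_sq_sigmaFS fun z => ?_).trans_eq integral_log_one_add_sq_sigmaFS
  exact log_le_log (by positivity) (by nlinarith [sq_nonneg ‖z‖])

theorem relEnt_map_smul_sigmaFS {c : ℝ} (hc : c ≠ 0) :
    relEnt (sigmaFS.map fun z : ℂ => c • z) sigmaFS =
      ENNReal.ofReal (-2 * log c + 2 * ∫ z, log (1 + c ^ 2 * ‖z‖ ^ 2) ∂sigmaFS - 2) := by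
  have hT : Measurable fun z : ℂ => c • z := measurable_const_smul c
  have hρ := measurable_fsScalingDensity c
  have hlog : (fun z : ℂ => log (fsScalingDensity c (c • z))) =
      fun z => -2 * log c + 2 * log (1 + c ^ 2 * ‖z‖ ^ 2) - 2 * log (1 + ‖z‖ ^ 2) :=
    funext (log_fsScalingDensity_smul hc)
  have hint₀ := (integrable_log_one_add_mul_sq_sigmaFS (sq_nonneg c)).const_mul 2
  have hint₁ : Integrable (fun z : ℂ => -2 * log c + 2 * log (1 + c ^ 2 * ‖z‖ ^ 2)) sigmaFS :=
    (integrable_const _).add hint₀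
  have hint₂ := integrable_log_one_add_sq_sigmaFS.const_mul 2
  have hint :
      Integrable (fun z => log (fsScalingDensity c z)) (sigmaFS.map fun z : ℂ => c • z) := by
    rw [integrable_map_measure hρ.log.aestronglyMeasurable hT.aemeasurable, Function.comp_def, hlog]
    exact hint₁.sub hint₂
  rw [map_smul_sigmaFS hc] at hint ⊢
  rw [relEnt_withDensity_ofReal hρ hint, ← map_smul_sigmaFS hc,
    integral_map hT.aemeasurable hρ.log.aestronglyMeasurable, hlog,
    integral_sub hint₁ hint₂, integral_add (integrable_const _) hint₀,
    integral_const, integral_const_mul, integral_const_mul, integral_log_one_add_sq_sigmaFS]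
  simp

/-- **Entropy growth along a Möbius one-parameter subgroup.** For `t ≥ 0` let
`T_t : ℂ → ℂ`, `T_t(z) = e^{-t/2} z`. Then `t − 2 ≤ D((T_t)_* σ_FS ‖ σ_FS) ≤ t`; in
particular `D((T_t)_* σ_FS ‖ σ_FS) = t + O(1)` as `t → ∞`. -/
theorem mobius_entropy_growth (t : ℝ) (ht : 0 ≤ t) :
    ENNReal.ofReal (t - 2) ≤
        relEnt (sigmaFS.map fun z => (Real.exp (-t / 2) : ℂ) * z) sigmaFS ∧
      relEnt (sigmaFS.map fun z => (Real.exp (-t / 2) : ℂ) * z) sigmaFS ≤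
        ENNReal.ofReal t := by
  set c := Real.exp (-t / 2)
  have hc : 0 < c := exp_pos _
  have hc₁ : c ^ 2 ≤ 1 := by
    rw [← exp_nat_mul]; exact exp_le_one_iff.2 (by linarith)
  have hlog : -2 * log c = t := by rw [log_exp]; ring
  have hT : (fun z : ℂ => (c : ℂ) * z) = fun z => c • z :=
    funext fun _ => Complex.real_smul.symm
  obtain ⟨h₀, h₁⟩ := integral_log_one_add_mul_sq_sigmaFS_mem_Icc (sq_nonneg c) hc₁
  rw [hT, relEnt_map_smul_sigmaFS hc.ne', hlog]
  exact ⟨ENNReal.ofReal_le_ofReal (by linarith), ENNReal.ofReal_le_ofReal (by linarith)⟩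
end

section
/- Let σ_FS be the Borel probability measure on ℂ with density z ↦ 1/(π (1 + |z|²)²) with respect to Lebesgue measure, for t ≥ 0 let T_t(z) = e^{−t/2} z, and let K(z,w) := 2|z−w| / ( √(1+|z|²) · √(1+|w|²) ). There exists a constant C such that for all t ≥ 0: | −2 ∬_{ℂ×ℂ} log K(z,w) d((T_t)_*σ_FS)(z) d((T_t)_*σ_FS)(w) − t | ≤ C. -/
open MeasureTheory
open scoped ENNReal

/-! Write `s = e^{-t/2}`. Off the diagonal, the kernel `log 2 - log K` at `(s z, s w)` equals
`t/2 - log |z - w| + (log (1 + s²|z|²) + log (1 + s²|w|²)) / 2`, and the diagonal is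
`σ_FS ⊗ σ_FS`-null. Since `σ_FS` has bounded density and a finite first moment, `log |z - w|` is
integrable (integrate `|log r| ≤ r⁻¹ + r`), and `0 ≤ log (1 + s²|z|²) ≤ 2|z|`. Hence
`L_t = t/2 - ∬ log |z - w| dσ_FS dσ_FS + ∫ log (1 + s²|z|²) dσ_FS` differs from `t/2` by a bounded
amount. -/

open Real Set Metric Filter

lemma norm_sub_le_sqrt_mul_sqrt {E : Type*} [SeminormedAddCommGroup E] (x y : E) :
    ‖x - y‖ ≤ √(1 + ‖x‖ ^ 2) * √(1 + ‖y‖ ^ 2) := by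
  rw [← Real.sqrt_mul (by positivity), Real.le_sqrt (norm_nonneg _) (by positivity)]
  nlinarith [norm_sub_le x y, norm_nonneg (x - y), sq_nonneg (‖x‖ * ‖y‖ - 1),
    norm_nonneg x, norm_nonneg y]

lemma abs_log_le_inv_add_self {x : ℝ} (hx : 0 ≤ x) : |log x| ≤ x⁻¹ + x :=
  abs_le.2 ⟨by linarith [neg_inv_le_log hx], by linarith [log_le_self hx, inv_nonneg.2 hx]⟩

lemma log_one_add_sq_le_two_mul {x : ℝ} (hx : 0 ≤ x) : log (1 + x ^ 2) ≤ 2 * x :=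
  calc log (1 + x ^ 2) ≤ log ((1 + x) ^ 2) := log_le_log (by positivity) (by nlinarith)
    _ = 2 * log (1 + x) := by rw [log_pow]; norm_num
    _ ≤ 2 * x := by linarith [log_le_sub_one_of_pos (by linarith : 0 < 1 + x)]

lemma ae_prod_fst_ne_snd {α : Type*} [MeasurableSpace α] [MeasurableEq α] (μ ν : Measure α)
    [SFinite ν] [NullSingletonClass ν] :
    ∀ᵐ p ∂μ.prod ν, p.1 ≠ p.2 :=
  (Measure.ae_prod_mem_iff_ae_ae_mem (measurableSet_eq_fun measurable_fst measurable_snd).compl).2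
    (Eventually.of_forall fun x => (ν.ae_ne x).mono fun _ h => Ne.symm h)

lemma integrable_log_one_add_norm_sq {α E : Type*} [MeasurableSpace α] [NormedAddCommGroup E]
    {μ : Measure α} {f : α → E} (hf : Integrable f μ) :
    Integrable (fun x => log (1 + ‖f x‖ ^ 2)) μ :=
  (hf.norm.const_mul 2).mono'
    (measurable_log.comp_aemeasurable
      ((hf.1.norm.pow 2).const_add 1).aemeasurable).aestronglyMeasurable
    (Eventually.of_forall fun x => by
      rw [norm_of_nonneg (log_nonneg (by simp only [le_add_iff_nonneg_right]; positivity))]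
      exact log_one_add_sq_le_two_mul (norm_nonneg _))

lemma integral_log_one_add_norm_real_mul_sq_le {μ : Measure ℂ} (hμ : Integrable (fun z => z) μ)
    {s : ℝ} (hs0 : 0 ≤ s) (hs1 : s ≤ 1) :
    ∫ z, log (1 + ‖(s : ℂ) * z‖ ^ 2) ∂μ ≤ 2 * ∫ z, ‖z‖ ∂μ := by
  rw [← integral_const_mul]
  refine integral_mono (integrable_log_one_add_norm_sq (hμ.const_mul _)) (hμ.norm.const_mul 2)
    fun z => (log_one_add_sq_le_two_mul (norm_nonneg _)).trans ?_
  rw [norm_mul, Complex.norm_real, norm_of_nonneg hs0]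
  nlinarith [norm_nonneg z]

lemma lintegral_inv_norm_sub_le {E : Type*} [NormedAddCommGroup E] [MeasurableSpace E]
    [BorelSpace E] {μ : Measure E} [μ.IsAddRightInvariant] {ν : Measure E} {c : ℝ≥0∞}
    (hν : ν ≤ c • μ) (x : E) :
    ∫⁻ y, ENNReal.ofReal ‖x - y‖⁻¹ ∂ν ≤
      ν univ + c * ∫⁻ u in ball (0 : E) 1, ENNReal.ofReal ‖u‖⁻¹ ∂μ := by
  set g := (ball (0 : E) 1).indicator fun u => ENNReal.ofReal ‖u‖⁻¹
  have hsplit : ∀ y, ENNReal.ofReal ‖x - y‖⁻¹ ≤ 1 + g (y - x) := by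
    intro y
    rw [norm_sub_rev]
    by_cases hy : ‖y - x‖ < 1
    · rw [show g (y - x) = _ from indicator_of_mem (mem_ball_zero_iff.2 hy) _]
      exact le_add_self
    · exact (ENNReal.ofReal_le_one.2 (inv_le_one_of_one_le₀ (not_lt.1 hy))).trans le_self_add
  calc ∫⁻ y, ENNReal.ofReal ‖x - y‖⁻¹ ∂ν ≤ ∫⁻ y, 1 + g (y - x) ∂ν := lintegral_mono hsplit
    _ = ν univ + ∫⁻ y, g (y - x) ∂ν := by
      rw [lintegral_add_left measurable_const, lintegral_one]
    _ ≤ ν univ + c * ∫⁻ y, g (y - x) ∂μ := by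
      gcongr
      exact (lintegral_mono' hν le_rfl).trans_eq (lintegral_smul_measure c _)
    _ = ν univ + c * ∫⁻ u in ball (0 : E) 1, ENNReal.ofReal ‖u‖⁻¹ ∂μ := by
      rw [lintegral_sub_right_eq_self g x, lintegral_indicator measurableSet_ball]

section HaarMeasure

variable {E : Type*} [NormedAddCommGroup E] [NormedSpace ℝ E] [FiniteDimensional ℝ E]
  [MeasurableSpace E] [BorelSpace E] {μ : Measure E} [μ.IsAddHaarMeasure]

lemma setLIntegral_ball_inv_norm_lt_top (hE : 1 < Module.finrank ℝ E) :
    ∫⁻ u in ball (0 : E) 1, ENNReal.ofReal ‖u‖⁻¹ ∂μ < ∞ := by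
  refine IntegrableOn.setLIntegral_lt_top (integrableOn_ball_of_norm_le_rpow (C := 1) (α := 1)
    hE.le (by exact_mod_cast hE) (Eventually.of_forall fun u => ?_)
    (by fun_prop))
  rw [one_mul, rpow_neg_one, norm_inv, norm_norm]

lemma integrable_inv_norm_sub (hE : 1 < Module.finrank ℝ E) {ν ρ : Measure E}
    [IsFiniteMeasure ν] [IsFiniteMeasure ρ] {c : ℝ≥0∞} (hc : c ≠ ∞) (hν : ν ≤ c • μ) :
    Integrable (fun p : E × E => ‖p.1 - p.2‖⁻¹) (ρ.prod ν) := by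
  refine ⟨by fun_prop, (hasFiniteIntegral_iff_ofReal
    (Eventually.of_forall fun p => by positivity)).2 ?_⟩
  calc ∫⁻ p, ENNReal.ofReal ‖p.1 - p.2‖⁻¹ ∂ρ.prod ν
      ≤ ∫⁻ x, ∫⁻ y, ENNReal.ofReal ‖x - y‖⁻¹ ∂ν ∂ρ := lintegral_prod_le _
    _ ≤ ∫⁻ _, ν univ + c * ∫⁻ u in ball (0 : E) 1, ENNReal.ofReal ‖u‖⁻¹ ∂μ ∂ρ :=
      lintegral_mono fun x => lintegral_inv_norm_sub_le hν x
    _ < ∞ := by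
      rw [lintegral_const]
      exact ENNReal.mul_lt_top (ENNReal.add_lt_top.2 ⟨measure_lt_top ν univ,
        ENNReal.mul_lt_top hc.lt_top (setLIntegral_ball_inv_norm_lt_top hE)⟩)
        (measure_lt_top ρ univ)

lemma integrable_log_norm_sub (hE : 1 < Module.finrank ℝ E) {ν ρ : Measure E}
    [IsFiniteMeasure ν] [IsFiniteMeasure ρ] {c : ℝ≥0∞} (hc : c ≠ ∞) (hν : ν ≤ c • μ)
    (hν₁ : Integrable (fun x => x) ν) (hρ₁ : Integrable (fun x => x) ρ) :
    Integrable (fun p : E × E => log ‖p.1 - p.2‖) (ρ.prod ν) :=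
  ((integrable_inv_norm_sub hE hc hν).fun_add
    ((hρ₁.norm.comp_fst ν).fun_add (hν₁.norm.comp_snd ρ))).mono'
    (Measurable.aestronglyMeasurable (by fun_prop))
    (Eventually.of_forall fun p => by
      rw [norm_eq_abs]
      linarith [abs_log_le_inv_add_self (norm_nonneg (p.1 - p.2)), norm_sub_le p.1 p.2])

end HaarMeasure

lemma integral_Ioi_mul_div_one_add_sq_sq : ∫ r in Ioi (0 : ℝ), r / (1 + r ^ 2) ^ 2 = 1 / 2 := by
  have hderiv : ∀ r ∈ Ici (0 : ℝ),
      HasDerivAt (fun r : ℝ => -(2 * (1 + r ^ 2))⁻¹) (r / (1 + r ^ 2) ^ 2) r := by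
    intro r _
    have h := ((((hasDerivAt_pow 2 r).const_add (1 : ℝ)).const_mul (2 : ℝ)).fun_inv
      (by positivity : (2 : ℝ) * (1 + r ^ 2) ≠ 0)).fun_neg
    refine h.congr_deriv ?_
    field_simp
    norm_num
  have hlim : Tendsto (fun r : ℝ => -(2 * (1 + r ^ 2))⁻¹) atTop (nhds 0) := by
    have h : Tendsto (fun r : ℝ => 2 * (1 + r ^ 2)) atTop atTop :=
      (tendsto_atTop_add_const_left _ 1 (tendsto_pow_atTop two_ne_zero)).const_mul_atTop two_pos
    simpa using h.inv_tendsto_atTop.neg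
  rw [integral_Ioi_of_hasDerivAt_of_nonneg' hderiv (fun r (hr : 0 < r) => by positivity) hlim]
  norm_num

lemma integral_fubiniStudy_density : ∫ z : ℂ, 1 / (π * (1 + ‖z‖ ^ 2) ^ 2) = 1 := by
  rw [integral_fun_norm_addHaar volume (fun r => 1 / (π * (1 + r ^ 2) ^ 2)),
    Complex.finrank_real_complex, Measure.real, Complex.volume_ball]
  have h : ∫ y in Ioi (0 : ℝ), y ^ (2 - 1) • (1 / (π * (1 + y ^ 2) ^ 2)) =
      π⁻¹ * ∫ r in Ioi (0 : ℝ), r / (1 + r ^ 2) ^ 2 := by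
    rw [← integral_const_mul]
    refine setIntegral_congr_fun measurableSet_Ioi fun r _ => ?_
    simp only [smul_eq_mul]
    field_simp
    ring
  rw [h, integral_Ioi_mul_div_one_add_sq_sq]
  simp only [ENNReal.ofReal_one, one_pow, one_mul, ENNReal.coe_toReal, NNReal.coe_real_pi,
    one_div, smul_eq_mul, nsmul_eq_mul, Nat.cast_ofNat]
  field_simp

lemma integrable_fubiniStudy_density : Integrable fun z : ℂ => 1 / (π * (1 + ‖z‖ ^ 2) ^ 2) := by
  have h := (integrable_rpow_neg_one_add_norm_sq (E := ℂ) (μ := volume) (r := 4)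
    (by norm_num [Complex.finrank_real_complex])).const_mul π⁻¹
  refine h.congr (Eventually.of_forall fun z => ?_)
  dsimp only
  rw [show -(4 : ℝ) / 2 = -((2 : ℕ) : ℝ) by norm_num, rpow_neg (by positivity), rpow_natCast,
    one_div, mul_inv]

instance inst_s18 : IsProbabilityMeasure sigmaFS where
  measure_univ := by
    rw [sigmaFS, withDensity_apply _ MeasurableSet.univ, setLIntegral_univ,
      ← ofReal_integral_eq_lintegral_ofReal integrable_fubiniStudy_density
        (Eventually.of_forall fun z => by positivity), integral_fubiniStudy_density,
      ENNReal.ofReal_one]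

instance : NullSingletonClass sigmaFS := nullSingletonClass_withDensity _

lemma sigmaFS_le_smul_volume : sigmaFS ≤ ENNReal.ofReal π⁻¹ • volume := by
  rw [sigmaFS, ← withDensity_const]
  refine withDensity_mono (Eventually.of_forall fun z => ENNReal.ofReal_le_ofReal ?_)
  rw [one_div]
  refine inv_anti₀ pi_pos (le_mul_of_one_le_right pi_pos.le (one_le_pow₀ ?_))
  simp only [le_add_iff_nonneg_right]; positivity

lemma integrable_id_sigmaFS : Integrable (fun z : ℂ => z) sigmaFS := by
  rw [sigmaFS, integrable_withDensity_iff_integrable_smul' (by fun_prop)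
    (Eventually.of_forall fun z => ENNReal.ofReal_lt_top)]
  refine ((integrable_rpow_neg_one_add_norm_sq (E := ℂ) (μ := volume) (r := 3)
    (by norm_num [Complex.finrank_real_complex])).const_mul π⁻¹).mono' (by fun_prop)
    (Eventually.of_forall fun z => ?_)
  set v := √(1 + ‖z‖ ^ 2)
  have hv : v ^ 2 = 1 + ‖z‖ ^ 2 := sq_sqrt (by positivity)
  have hv0 : 0 < v := sqrt_pos.2 (by positivity)
  have hzv : ‖z‖ ≤ v := le_sqrt_of_sq_le (by linarith)
  have hrpow : (1 + ‖z‖ ^ 2) ^ (-(3 : ℝ) / 2) = (v ^ 3)⁻¹ := by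
    rw [show v = _ from sqrt_eq_rpow _, ← rpow_natCast ((1 + ‖z‖ ^ 2) ^ (1 / 2 : ℝ)) 3,
      ← rpow_mul (by positivity), ← rpow_neg (by positivity)]
    norm_num
  rw [hrpow, norm_smul, ENNReal.toReal_ofReal (by positivity), norm_of_nonneg (by positivity),
    ← hv]
  calc 1 / (π * (v ^ 2) ^ 2) * ‖z‖ ≤ 1 / (π * (v ^ 2) ^ 2) * v := by gcongr
    _ = π⁻¹ * (v ^ 3)⁻¹ := by field_simp

noncomputable def chordalLogKernel (z w : ℂ) : ℝ :=
  log 2 - log (2 * ‖z - w‖ / (√(1 + ‖z‖ ^ 2) * √(1 + ‖w‖ ^ 2)))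

lemma measurable_chordalLogKernel : Measurable fun p : ℂ × ℂ => chordalLogKernel p.1 p.2 := by
  unfold chordalLogKernel; fun_prop

lemma chordalLogKernel_nonneg (z w : ℂ) : 0 ≤ chordalLogKernel z w := by
  have hD : 0 < √(1 + ‖z‖ ^ 2) * √(1 + ‖w‖ ^ 2) := by positivity
  have hK : 2 * ‖z - w‖ / (√(1 + ‖z‖ ^ 2) * √(1 + ‖w‖ ^ 2)) ≤ 2 := by
    rw [div_le_iff₀ hD]
    linarith [norm_sub_le_sqrt_mul_sqrt z w]
  rw [chordalLogKernel, sub_nonneg]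
  rcases (by positivity : 0 ≤ 2 * ‖z - w‖ / (√(1 + ‖z‖ ^ 2) * √(1 + ‖w‖ ^ 2))).eq_or_lt
    with h0 | hpos
  · rw [← h0, log_zero]
    exact log_nonneg one_le_two
  · exact log_le_log hpos hK

lemma chordalLogKernel_of_ne {z w : ℂ} (h : z ≠ w) :
    chordalLogKernel z w = -log ‖z - w‖ + (log (1 + ‖z‖ ^ 2) + log (1 + ‖w‖ ^ 2)) / 2 := by
  have hzw : ‖z - w‖ ≠ 0 := norm_ne_zero_iff.2 (sub_ne_zero.2 h)
  rw [chordalLogKernel, log_div (by positivity) (by positivity), log_mul two_ne_zero hzw,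
    log_mul (by positivity) (by positivity), log_sqrt (by positivity), log_sqrt (by positivity)]
  ring

section ChordalLogKernel

variable {μ : Measure ℂ} {s : ℝ}

lemma chordalLogKernel_real_mul_ae_eq (hs : 0 < s) (hdiag : ∀ᵐ p ∂μ.prod μ, p.1 ≠ p.2) :
    (fun p : ℂ × ℂ => chordalLogKernel (s * p.1) (s * p.2)) =ᵐ[μ.prod μ] fun p =>
      -log s - log ‖p.1 - p.2‖ +
        (log (1 + ‖(s : ℂ) * p.1‖ ^ 2) + log (1 + ‖(s : ℂ) * p.2‖ ^ 2)) / 2 := by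
  filter_upwards [hdiag] with p hp
  have hs' : (s : ℂ) ≠ 0 := Complex.ofReal_ne_zero.2 hs.ne'
  rw [chordalLogKernel_of_ne (mul_right_injective₀ hs' |>.ne hp), ← mul_sub, norm_mul,
    Complex.norm_real, norm_of_nonneg hs.le,
    log_mul hs.ne' (norm_ne_zero_iff.2 (sub_ne_zero.2 hp))]
  ring

lemma integrable_chordalLogKernel_real_mul [IsFiniteMeasure μ] (hs : 0 < s)
    (hdiag : ∀ᵐ p ∂μ.prod μ, p.1 ≠ p.2)
    (hlog : Integrable (fun p : ℂ × ℂ => log ‖p.1 - p.2‖) (μ.prod μ))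
    (hq : Integrable (fun z => log (1 + ‖(s : ℂ) * z‖ ^ 2)) μ) :
    Integrable (fun p : ℂ × ℂ => chordalLogKernel (s * p.1) (s * p.2)) (μ.prod μ) :=
  ((((integrable_const _).sub hlog).fun_add
    (((hq.comp_fst μ).fun_add (hq.comp_snd μ)).div_const 2))).congr
    (chordalLogKernel_real_mul_ae_eq hs hdiag).symm

lemma integral_chordalLogKernel_real_mul [IsProbabilityMeasure μ] (hs : 0 < s)
    (hdiag : ∀ᵐ p ∂μ.prod μ, p.1 ≠ p.2)
    (hlog : Integrable (fun p : ℂ × ℂ => log ‖p.1 - p.2‖) (μ.prod μ))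
    (hq : Integrable (fun z => log (1 + ‖(s : ℂ) * z‖ ^ 2)) μ) :
    ∫ p, chordalLogKernel (s * p.1) (s * p.2) ∂μ.prod μ =
      -log s - ∫ p, log ‖p.1 - p.2‖ ∂μ.prod μ + ∫ z, log (1 + ‖(s : ℂ) * z‖ ^ 2) ∂μ := by
  have h1 : Integrable (fun p : ℂ × ℂ => log (1 + ‖(s : ℂ) * p.1‖ ^ 2)) (μ.prod μ) :=
    hq.comp_fst μ
  have h2 : Integrable (fun p : ℂ × ℂ => log (1 + ‖(s : ℂ) * p.2‖ ^ 2)) (μ.prod μ) :=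
    hq.comp_snd μ
  have h0 : Integrable (fun p : ℂ × ℂ => -log s - log ‖p.1 - p.2‖) (μ.prod μ) :=
    (integrable_const _).sub hlog
  rw [integral_congr_ae (chordalLogKernel_real_mul_ae_eq hs hdiag),
    integral_add h0 ((h1.fun_add h2).div_const 2), integral_sub (integrable_const _) hlog,
    integral_div, integral_add h1 h2, integral_fun_fst (fun z => log (1 + ‖(s : ℂ) * z‖ ^ 2)),
    integral_fun_snd (fun z => log (1 + ‖(s : ℂ) * z‖ ^ 2)), integral_const]
  simp only [probReal_univ, one_smul, add_self_div_two]

lemma lintegral_chordalLogKernel_map_real_mul [SFinite μ]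
    (hk : Integrable (fun p : ℂ × ℂ => chordalLogKernel (s * p.1) (s * p.2)) (μ.prod μ)) :
    ∫⁻ p, ENNReal.ofReal (chordalLogKernel p.1 p.2)
        ∂((μ.map fun z => (s : ℂ) * z).prod (μ.map fun z => (s : ℂ) * z)) =
      ENNReal.ofReal (∫ p, chordalLogKernel (s * p.1) (s * p.2) ∂μ.prod μ) := by
  have hm : Measurable fun z : ℂ => (s : ℂ) * z := measurable_const_mul _
  rw [Measure.map_prod_map _ _ hm hm, lintegral_map measurable_chordalLogKernel.ennreal_ofReal
    (hm.prodMap hm), ofReal_integral_eq_lintegral_ofReal hk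
      (Eventually.of_forall fun p => chordalLogKernel_nonneg _ _)]
  rfl

end ChordalLogKernel

/-- **Energy growth along a Möbius one-parameter subgroup.** For `t ≥ 0` let
`T_t(z) = e^{-t/2} z` and `μ_t = (T_t)_* σ_FS`, and let
`K(z,w) = 2|z-w|/(√(1+|z|²) √(1+|w|²))` be the chordal distance. There is a constant `C`
such that `|−2 ∬ log K d μ_t d μ_t − t| ≤ C` for all `t ≥ 0`. (Since `K ≤ 2`, the double
integral is expressed via the nonnegative kernel `log 2 − log K`:
`−2 ∬ log K = 2 L_t − 2 log 2` with `L_t = ∫⁻ (log 2 − log K) d(μ_t × μ_t)`, which is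
asserted to be finite.) -/
theorem mobius_energy_growth :
    ∃ C : ℝ, ∀ t : ℝ, 0 ≤ t →
      let μt := sigmaFS.map fun z => (Real.exp (-t / 2) : ℂ) * z
      let L := ∫⁻ p : ℂ × ℂ,
        ENNReal.ofReal (Real.log 2 -
          Real.log (2 * ‖p.1 - p.2‖ /
            (Real.sqrt (1 + ‖p.1‖ ^ 2) * Real.sqrt (1 + ‖p.2‖ ^ 2)))) ∂(μt.prod μt)
      L ≠ ∞ ∧ |2 * L.toReal - 2 * Real.log 2 - t| ≤ C := by
  set I := ∫ p : ℂ × ℂ, log ‖p.1 - p.2‖ ∂(sigmaFS.prod sigmaFS)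
  set M := ∫ z : ℂ, ‖z‖ ∂sigmaFS
  refine ⟨2 * |I| + 4 * M + 2 * log 2, fun t ht => ?_⟩
  intro μt L
  set s := exp (-t / 2)
  have hs : 0 < s := exp_pos _
  have hdiag := ae_prod_fst_ne_snd sigmaFS sigmaFS
  have hlog : Integrable (fun p : ℂ × ℂ => log ‖p.1 - p.2‖) (sigmaFS.prod sigmaFS) :=
    integrable_log_norm_sub (by simp) ENNReal.ofReal_ne_top sigmaFS_le_smul_volume
      integrable_id_sigmaFS integrable_id_sigmaFS
  have hq := integrable_log_one_add_norm_sq (integrable_id_sigmaFS.const_mul (s : ℂ))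
  have hL : L = ENNReal.ofReal (∫ p, chordalLogKernel (s * p.1) (s * p.2) ∂sigmaFS.prod sigmaFS) :=
    lintegral_chordalLogKernel_map_real_mul (integrable_chordalLogKernel_real_mul hs hdiag hlog hq)
  have hQ0 : 0 ≤ ∫ z, log (1 + ‖(s : ℂ) * z‖ ^ 2) ∂sigmaFS :=
    integral_nonneg fun z => log_nonneg (by simp only [le_add_iff_nonneg_right]; positivity)
  have hQ := integral_log_one_add_norm_real_mul_sq_le integrable_id_sigmaFS hs.le
    (exp_le_one_iff.2 (by linarith))
  refine ⟨hL ▸ ENNReal.ofReal_ne_top, ?_⟩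
  rw [hL, ENNReal.toReal_ofReal (integral_nonneg fun p => chordalLogKernel_nonneg _ _),
    integral_chordalLogKernel_real_mul hs hdiag hlog hq, log_exp, abs_le]
  constructor <;> linarith [le_abs_self I, neg_abs_le I, log_nonneg (one_le_two : (1 : ℝ) ≤ 2)]
end

section
/- There exists a constant C such that for all integers N ≥ 2: | (1/N) log N! − log( −Γ(−1/(N+2)) / Γ(1 + 1/(N+2)) ) + 1 − (log N)/(2N) | ≤ C/N; that is, (1/N) log N! − log(−l(−1/(N+2))) = −1 + (log N)/(2N) + O(1/N), where l(x) := Γ(x)/Γ(1−x). -/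
open Real

private lemma aux_Gamma_two : Real.Gamma 2 = 1 := by
  rw [show (2:ℝ) = 1 + 1 by norm_num, Real.Gamma_add_one one_ne_zero, Real.Gamma_one]; ring

private lemma aux_logGamma {ε : ℝ} (h0 : 0 < ε) (h1 : ε ≤ 1/2) :
    -(ε * Real.log π) ≤ Real.log (Real.Gamma (1+ε)) ∧
    Real.log (Real.Gamma (1+ε)) ≤ 0 ∧
    0 ≤ Real.log (Real.Gamma (1-ε)) ∧
    Real.log (Real.Gamma (1-ε)) ≤ ε * Real.log π := by
  have hc := Real.convexOn_log_Gamma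
  have hhalf : Real.log (Real.Gamma (1/2)) = Real.log π / 2 := by
    rw [Real.Gamma_one_half_eq, Real.log_sqrt Real.pi_pos.le]
  have hmem1 : (1:ℝ) ∈ Set.Ioi (0:ℝ) := by norm_num
  have hmem2 : (2:ℝ) ∈ Set.Ioi (0:ℝ) := by norm_num
  have hmemh : (1/2:ℝ) ∈ Set.Ioi (0:ℝ) := by norm_num
  have hmemp : (1+ε:ℝ) ∈ Set.Ioi (0:ℝ) := by simp; linarith
  have hmemm : (1-ε:ℝ) ∈ Set.Ioi (0:ℝ) := by simp; linarith
  have hu : (0:ℝ) < 1 + 2*ε := by linarith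
  have hv : (0:ℝ) < 1 + ε := by linarith
  refine ⟨?_, ?_, ?_, ?_⟩
  · -- lower bound for log Γ(1+ε)
    have h := hc.2 hmemh hmemp (show (0:ℝ) ≤ 2*ε/(1+2*ε) by positivity)
      (show (0:ℝ) ≤ 1/(1+2*ε) by positivity)
      (show 2*ε/(1+2*ε) + 1/(1+2*ε) = 1 by field_simp; ring)
    simp only [smul_eq_mul, Function.comp_apply] at h
    rw [show 2*ε/(1+2*ε) * (1/2) + 1/(1+2*ε) * (1+ε) = 1 by field_simp; ring] at h
    rw [Real.Gamma_one, Real.log_one, hhalf] at h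
    rw [show 2*ε/(1+2*ε) * (Real.log π / 2) + 1/(1+2*ε) * Real.log (Real.Gamma (1+ε))
        = (ε * Real.log π + Real.log (Real.Gamma (1+ε)))/(1+2*ε) by field_simp,
      le_div_iff₀ hu, zero_mul] at h
    linarith
  · -- upper bound for log Γ(1+ε)
    have h := hc.2 hmem1 hmem2 (show (0:ℝ) ≤ 1-ε by linarith) h0.le
      (show 1-ε + ε = 1 by ring)
    simp only [smul_eq_mul, Function.comp_apply] at h
    rw [show (1-ε)*1 + ε*2 = 1+ε by ring, Real.Gamma_one, aux_Gamma_two, Real.log_one] at h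
    linarith
  · -- lower bound for log Γ(1-ε)
    have h := hc.2 hmemm hmem2 (show (0:ℝ) ≤ 1/(1+ε) by positivity)
      (show (0:ℝ) ≤ ε/(1+ε) by positivity)
      (show 1/(1+ε) + ε/(1+ε) = 1 by field_simp)
    simp only [smul_eq_mul, Function.comp_apply] at h
    rw [show 1/(1+ε) * (1-ε) + ε/(1+ε) * 2 = 1 by field_simp; ring] at h
    rw [Real.Gamma_one, Real.log_one, aux_Gamma_two, Real.log_one, mul_zero, add_zero,
      show 1/(1+ε) * Real.log (Real.Gamma (1-ε)) = Real.log (Real.Gamma (1-ε))/(1+ε) by ring,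
      le_div_iff₀ hv, zero_mul] at h
    exact h
  · -- upper bound for log Γ(1-ε)
    have h := hc.2 hmemh hmem1 (show (0:ℝ) ≤ 2*ε by positivity)
      (show (0:ℝ) ≤ 1-2*ε by linarith) (show 2*ε + (1-2*ε) = 1 by ring)
    simp only [smul_eq_mul, Function.comp_apply] at h
    rw [show 2*ε*(1/2) + (1-2*ε)*1 = 1-ε by ring, Real.Gamma_one, Real.log_one, hhalf] at h
    linarith

private lemma aux_stirling {N : ℕ} (hN : 1 ≤ N) :
    0 ≤ Real.log (Stirling.stirlingSeq N) ∧ Real.log (Stirling.stirlingSeq N) ≤ 1 := by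
  obtain ⟨M, rfl⟩ : ∃ M, N = M + 1 := ⟨N - 1, by omega⟩
  constructor
  · have h1 : Filter.Tendsto (Stirling.stirlingSeq ∘ Nat.succ) Filter.atTop (nhds (√π)) :=
      Stirling.tendsto_stirlingSeq_sqrt_pi.comp (Filter.tendsto_add_atTop_nat 1)
    have ht : Filter.Tendsto (Real.log ∘ Stirling.stirlingSeq ∘ Nat.succ) Filter.atTop
        (nhds (Real.log (√π))) :=
      ((Real.continuousAt_log (by positivity)).tendsto).comp h1
    have h2 := Stirling.log_stirlingSeq'_antitone.le_of_tendsto ht M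
    have h3 : 0 ≤ Real.log (√π) := by
      apply Real.log_nonneg
      rw [show (1:ℝ) = √1 by simp]
      exact Real.sqrt_le_sqrt (by linarith [Real.pi_gt_three])
    exact le_trans h3 h2
  · have h := Stirling.log_stirlingSeq'_antitone (Nat.zero_le M)
    simp only [Function.comp_apply] at h
    have h1 : Real.log (Stirling.stirlingSeq 1) = 1 - Real.log 2 / 2 := by
      rw [Stirling.stirlingSeq_one, Real.log_div (Real.exp_ne_zero 1) (by positivity),
        Real.log_exp, Real.log_sqrt (by norm_num)]
    have h2 : 0 ≤ Real.log 2 := Real.log_nonneg (by norm_num)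
    calc Real.log (Stirling.stirlingSeq (M + 1)) ≤ Real.log (Stirling.stirlingSeq (0 + 1)) := h
      _ ≤ 1 := by rw [zero_add, h1]; linarith

set_option maxHeartbeats 1000000 in
/-- **Stirling-type asymptotics for the Gamma prefactor.** With `l(x) = Γ(x)/Γ(1−x)`, there
is a constant `C` such that for all integers `N ≥ 2`,
`| (1/N) log N! − log(−Γ(−1/(N+2))/Γ(1+1/(N+2))) + 1 − (log N)/(2N) | ≤ C/N`;
that is, `(1/N) log N! − log(−l(−1/(N+2))) = −1 + (log N)/(2N) + O(1/N)`. -/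
theorem stirling_gamma_prefactor_asymptotics :
    ∃ C : ℝ, ∀ N : ℕ, 2 ≤ N →
      |(1 / (N : ℝ)) * Real.log (Nat.factorial N : ℝ) -
          Real.log (-Real.Gamma (-(1 / ((N : ℝ) + 2))) /
            Real.Gamma (1 + 1 / ((N : ℝ) + 2))) +
          1 - Real.log N / (2 * N)| ≤ C / N := by
  refine ⟨8, fun N hN => ?_⟩
  have hn2 : (2:ℝ) ≤ (N:ℝ) := by exact_mod_cast hN
  set n : ℝ := (N:ℝ) with hn_def
  have hn0 : (0:ℝ) < n := by linarith
  set ε : ℝ := 1/(n+2) with hε_def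
  have hε0 : 0 < ε := by positivity
  have hε12 : ε ≤ 1/2 := by
    rw [hε_def, div_le_div_iff₀ (by linarith) (by norm_num)]; linarith
  have hεn : ε ≤ 1/n := by
    rw [hε_def, div_le_div_iff₀ (by linarith) hn0]; linarith
  -- Gamma manipulations
  have hG1 : 0 < Real.Gamma (1+ε) := Real.Gamma_pos_of_pos (by linarith)
  have hG2 : 0 < Real.Gamma (1-ε) := Real.Gamma_pos_of_pos (by linarith)
  have hGneg : -Real.Gamma (-ε) = Real.Gamma (1-ε) / ε := by
    have h := Real.Gamma_add_one (neg_ne_zero.mpr hε0.ne')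
    rw [show -ε + 1 = 1 - ε by ring] at h
    field_simp [h]
    linear_combination -h
  have hA : Real.log (-Real.Gamma (-ε) / Real.Gamma (1+ε))
      = Real.log (Real.Gamma (1-ε)) + Real.log (n+2) - Real.log (Real.Gamma (1+ε)) := by
    rw [hGneg, Real.log_div (by positivity) hG1.ne', Real.log_div hG2.ne' hε0.ne',
      hε_def, Real.log_div one_ne_zero (by linarith : n + 2 ≠ 0), Real.log_one]
    ring
  -- Stirling
  have hs := Stirling.log_stirlingSeq_formula N
  have hfact : Real.log (Nat.factorial N : ℝ)
      = Real.log (Stirling.stirlingSeq N) + 1/2 * (Real.log 2 + Real.log n)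
        + n * (Real.log n - 1) := by
    have h1 : Real.log ((N:ℝ) / Real.exp 1) = Real.log n - 1 := by
      rw [Real.log_div hn0.ne' (Real.exp_ne_zero 1), Real.log_exp]
    have h2 : Real.log (2 * (N:ℝ)) = Real.log 2 + Real.log n :=
      Real.log_mul two_ne_zero hn0.ne'
    rw [h2, h1] at hs
    linarith
  -- bounds
  obtain ⟨hs0, hs1⟩ := aux_stirling (by omega : 1 ≤ N)
  obtain ⟨hg1, hg2, hg3, hg4⟩ := aux_logGamma hε0 hε12
  have hL0 : 0 ≤ Real.log π := Real.log_nonneg (by linarith [Real.pi_gt_three])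
  have hL2 : Real.log π ≤ 2 := by
    have h4 : Real.log π ≤ Real.log 4 :=
      Real.log_le_log Real.pi_pos Real.pi_le_four
    have : Real.log 4 = 2 * Real.log 2 := by
      rw [show (4:ℝ) = 2^2 by norm_num, Real.log_pow]; push_cast; ring
    have := Real.log_two_lt_d9
    linarith
  have hεL : ε * Real.log π ≤ 2*(1/n) := by
    calc ε * Real.log π ≤ (1/n) * 2 := by
          apply mul_le_mul hεn hL2 hL0 (by positivity)
      _ = 2*(1/n) := by ring
  have hlogn : 0 ≤ Real.log (n+2) - Real.log n ∧ Real.log (n+2) - Real.log n ≤ 2*(1/n) := by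
    constructor
    · have := Real.log_le_log hn0 (by linarith : n ≤ n + 2)
      linarith
    · have h1 : Real.log (n+2) - Real.log n = Real.log ((n+2)/n) := by
        rw [Real.log_div (by linarith) hn0.ne']
      have h2 : Real.log ((n+2)/n) ≤ (n+2)/n - 1 :=
        Real.log_le_sub_one_of_pos (by positivity)
      have h3 : (n+2)/n - 1 = 2*(1/n) := by field_simp; ring
      linarith
  have hlog2 : 0 ≤ Real.log 2 ∧ Real.log 2 ≤ 2 := by
    constructor
    · exact Real.log_nonneg (by norm_num)
    · have := Real.log_two_lt_d9; linarith
  -- assemble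
  rw [hA, hfact]
  rw [abs_le]
  have key : (1/n) * (Real.log (Stirling.stirlingSeq N) + 1/2 * (Real.log 2 + Real.log n)
        + n * (Real.log n - 1))
      - (Real.log (Real.Gamma (1-ε)) + Real.log (n+2) - Real.log (Real.Gamma (1+ε)))
      + 1 - Real.log n / (2*n)
      = Real.log (Stirling.stirlingSeq N) / n + Real.log 2 / (2*n)
        - (Real.log (n+2) - Real.log n)
        + (Real.log (Real.Gamma (1+ε)) - Real.log (Real.Gamma (1-ε))) := by
    field_simp
    ring
  rw [key]
  have b1 : 0 ≤ Real.log (Stirling.stirlingSeq N) / n := by positivity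
  have b2 : Real.log (Stirling.stirlingSeq N) / n ≤ 1/n := by
    rw [div_le_div_iff₀ hn0 hn0]; nlinarith
  have b3 : 0 ≤ Real.log 2 / (2*n) := by
    apply div_nonneg hlog2.1; linarith
  have b4 : Real.log 2 / (2*n) ≤ 1/n := by
    rw [div_le_div_iff₀ (by linarith) hn0]
    nlinarith [hlog2.2]
  have b5 : Real.log (Real.Gamma (1+ε)) - Real.log (Real.Gamma (1-ε)) ≤ 0 := by linarith
  have b6 : -(4*(1/n)) ≤ Real.log (Real.Gamma (1+ε)) - Real.log (Real.Gamma (1-ε)) := by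
    linarith
  have h8 : (8:ℝ)/n = 8*(1/n) := by ring
  rw [h8]
  constructor
  · linarith [hlogn.1, hlogn.2]
  · linarith [hlogn.1, hlogn.2]
end
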